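/- arXiv:2102.09481 — 7 statements merged into one kernel-verified Lean document; each statement's English description precedes it below -/
import Mathlib

section
/- For integers and real vectors: if ψ(n₁,n₂,m₁,m₂) = (n₂², n₁n₂, n₁², m₂², m₁m₂, m₁²) ∈ ℤ⁶, then ψ(n₁,n₂,m₁,m₂) is proportional (over ℝ) to ψ(ℓ₁,ℓ₂,k₁,k₂) if and only if the vector (n₁,n₂,m₁,m₂) is proportional to (ℓ₁,ℓ₂,k₁,k₂) or to (ℓ₁,ℓ₂,-k₁,-k₂). -/
lemma pair_aux (s a b c d : ℝ) (hs : s ≠ 0)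
    (h1 : a ^ 2 = s ^ 2 * c ^ 2) (h2 : a * b = s ^ 2 * (c * d))
    (h3 : b ^ 2 = s ^ 2 * d ^ 2) :
    (a = s * c ∧ b = s * d) ∨ (a = -(s * c) ∧ b = -(s * d)) := by
  have hz : (a * d - b * c) ^ 2 = 0 := by
    linear_combination d ^ 2 * h1 + c ^ 2 * h3 - 2 * c * d * h2
  have had : a * d = b * c := by
    have := pow_eq_zero_iff (n := 2) (by norm_num) |>.1 hz
    linarith [sub_eq_zero.1 this]
  have ha : (a - s * c) * (a + s * c) = 0 := by linear_combination h1
  have hb : (b - s * d) * (b + s * d) = 0 := by linear_combination h3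
  rcases mul_eq_zero.1 ha with ha | ha <;> rcases mul_eq_zero.1 hb with hb | hb
  · left; constructor <;> linarith
  · by_cases hc : c = 0
    · right
      refine ⟨by rw [hc]; simpa [hc] using ha, by linarith⟩
    · left
      have h' : (b - s * d) * c = 0 := by linear_combination d * ha - had
      rcases mul_eq_zero.1 h' with h | h
      · constructor <;> linarith
      · exact absurd h hc
  · by_cases hc : c = 0
    · left
      refine ⟨by rw [hc]; simpa [hc] using ha, by linarith⟩
    · right
      have h' : (b + s * d) * c = 0 := by linear_combination d * ha - had
      rcases mul_eq_zero.1 h' with h | h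
      · constructor <;> linarith
      · exact absurd h hc
  · right; constructor <;> linarith

theorem stmt_1 (n₁ n₂ m₁ m₂ l₁ l₂ k₁ k₂ : ℤ)
    (hn : (n₁, n₂, m₁, m₂) ≠ (0, 0, 0, 0))
    (hl : (l₁, l₂, k₁, k₂) ≠ (0, 0, 0, 0)) :
    (∃ t : ℝ, t ≠ 0 ∧
        ((n₂ ^ 2 : ℝ), (n₁ * n₂ : ℝ), (n₁ ^ 2 : ℝ), (m₂ ^ 2 : ℝ), (m₁ * m₂ : ℝ), (m₁ ^ 2 : ℝ)) =
          (t * (l₂ ^ 2 : ℝ), t * (l₁ * l₂ : ℝ), t * (l₁ ^ 2 : ℝ),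
           t * (k₂ ^ 2 : ℝ), t * (k₁ * k₂ : ℝ), t * (k₁ ^ 2 : ℝ))) ↔
      ((∃ s : ℝ, s ≠ 0 ∧
          ((n₁ : ℝ), (n₂ : ℝ), (m₁ : ℝ), (m₂ : ℝ)) =
            (s * (l₁ : ℝ), s * (l₂ : ℝ), s * (k₁ : ℝ), s * (k₂ : ℝ))) ∨
       (∃ s : ℝ, s ≠ 0 ∧
          ((n₁ : ℝ), (n₂ : ℝ), (m₁ : ℝ), (m₂ : ℝ)) =
            (s * (l₁ : ℝ), s * (l₂ : ℝ), s * (-k₁ : ℝ), s * (-k₂ : ℝ)))) := by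
  constructor
  · rintro ⟨t, ht0, heq⟩
    simp only [Prod.mk.injEq] at heq
    obtain ⟨e1, e2, e3, e4, e5, e6⟩ := heq
    have hone : l₁ ≠ 0 ∨ l₂ ≠ 0 ∨ k₁ ≠ 0 ∨ k₂ ≠ 0 := by
      by_contra h
      push_neg at h
      exact hl (by simp [h.1, h.2.1, h.2.2.1, h.2.2.2])
    have hlpos : (0:ℝ) < (l₁:ℝ)^2 + (l₂:ℝ)^2 + (k₁:ℝ)^2 + (k₂:ℝ)^2 := by
      rcases hone with h | h | h | h <;>
        [ (have : ((l₁:ℝ)) ≠ 0 := Int.cast_ne_zero.2 h);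
          (have : ((l₂:ℝ)) ≠ 0 := Int.cast_ne_zero.2 h);
          (have : ((k₁:ℝ)) ≠ 0 := Int.cast_ne_zero.2 h);
          (have : ((k₂:ℝ)) ≠ 0 := Int.cast_ne_zero.2 h)] <;>
        nlinarith [sq_nonneg (l₁:ℝ), sq_nonneg (l₂:ℝ), sq_nonneg (k₁:ℝ), sq_nonneg (k₂:ℝ),
          lt_of_le_of_ne (sq_nonneg _) (Ne.symm (pow_ne_zero 2 this))]
    have ht : 0 < t := by
      rcases lt_or_eq_of_le (le_of_not_gt (fun h : t < 0 => by
        nlinarith [sq_nonneg (n₁:ℝ), sq_nonneg (n₂:ℝ), sq_nonneg (m₁:ℝ), sq_nonneg (m₂:ℝ)])) with h | h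
      · exact h
      · exact absurd h.symm ht0
    set s := Real.sqrt t with hs
    have hs2 : s ^ 2 = t := Real.sq_sqrt ht.le
    have hsne : s ≠ 0 := by positivity
    have P1 := pair_aux s (n₁:ℝ) (n₂:ℝ) (l₁:ℝ) (l₂:ℝ) hsne (by rw [hs2]; exact e3) (by rw [hs2]; exact e2) (by rw [hs2]; exact e1)
    have P2 := pair_aux s (m₁:ℝ) (m₂:ℝ) (k₁:ℝ) (k₂:ℝ) hsne (by rw [hs2]; exact e6) (by rw [hs2]; exact e5) (by rw [hs2]; exact e4)
    rcases P1 with ⟨p1, p2⟩ | ⟨p1, p2⟩ <;> rcases P2 with ⟨q1, q2⟩ | ⟨q1, q2⟩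
    · exact Or.inl ⟨s, hsne, by
        simp only [Prod.mk.injEq]
        exact ⟨p1, p2, q1, q2⟩⟩
    · exact Or.inr ⟨s, hsne, by
        simp only [Prod.mk.injEq]
        push_cast
        exact ⟨p1, p2, by rw [q1]; ring, by rw [q2]; ring⟩⟩
    · exact Or.inr ⟨-s, neg_ne_zero.2 hsne, by
        simp only [Prod.mk.injEq]
        push_cast
        exact ⟨by rw [p1]; ring, by rw [p2]; ring, by rw [q1]; ring, by rw [q2]; ring⟩⟩
    · exact Or.inl ⟨-s, neg_ne_zero.2 hsne, by
        simp only [Prod.mk.injEq]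
        exact ⟨by rw [p1]; ring, by rw [p2]; ring, by rw [q1]; ring, by rw [q2]; ring⟩⟩
  · rintro (⟨s, hsne, heq⟩ | ⟨s, hsne, heq⟩) <;>
    · simp only [Prod.mk.injEq] at heq
      obtain ⟨e1, e2, e3, e4⟩ := heq
      refine ⟨s ^ 2, pow_ne_zero 2 hsne, ?_⟩
      simp only [Prod.mk.injEq]
      push_cast at e3 e4 ⊢
      refine ⟨by rw [e2]; ring, by rw [e1, e2]; ring, by rw [e1]; ring,
        by rw [e4]; ring, by rw [e3, e4]; ring, by rw [e3]; ring⟩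
end

section
/- Let q ∈ ℤ⁶ be nonzero and H = q^⊥ ⊂ ℝ⁶. The set of points p ∈ H that are 'very well approximated', i.e., such that there exists ε > 0 with infinitely many (n₁,n₂,m₁,m₂) ∈ ℤ⁴ satisfying 0 < |p·ψ(n₁,n₂,m₁,m₂)| ≤ max(|n₁|,|n₂|,|m₁|,|m₂|)^(-4-ε), has measure zero in H (with respect to the 5-dimensional Lebesgue measure on the hyperplane H). -/
/-!
For `x ∈ ℤ⁴`, `p ↦ ⟪ψ x, p⟫` restricted to `H = q^⊥` is the inner product with the projection
`w` of `ψ x` onto `H`. Scaled by `‖q‖²` this projection is a nonzero integer vector (or zero, in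
which case nothing is approximated), so `‖w‖ ≥ ‖q‖⁻²`. Hence, within a ball of radius `R`, the
points of `H` with `|⟪ψ x, p⟫| ≤ δ` lie in a slab of width `≲ ‖q‖² δ`, of `μH[5]`-measure
`≲ ‖q‖² δ R⁴`. With `δ = ‖x‖^(-4-ε)` these measures are summable over `ℤ⁴`, and Borel–Cantelli
finishes the proof after a countable union over `ε = 1/(k+1)` and `R ∈ ℕ`.
-/

open MeasureTheory Set Filter Module
open scoped ENNReal NNReal RealInnerProductSpace

section Slab

variable {E : Type*} [NormedAddCommGroup E] [InnerProductSpace ℝ E]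

theorem lipschitzWith_sum_smul {ι : Type*} [Fintype ι] (f : ι → E) (hf : ∀ i, ‖f i‖ ≤ 1) :
    LipschitzWith (Fintype.card ι) (fun y : ι → ℝ => ∑ i, y i • f i) := by
  refine LipschitzWith.of_dist_le_mul fun y z => ?_
  calc dist (∑ i, y i • f i) (∑ i, z i • f i) = ‖∑ i, (y i - z i) • f i‖ := by
        simp only [dist_eq_norm, sub_smul, Finset.sum_sub_distrib]
    _ ≤ ∑ i, ‖(y i - z i) • f i‖ := norm_sum_le _ _
    _ ≤ ∑ _i : ι, dist y z := Finset.sum_le_sum fun i _ => by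
        rw [norm_smul, ← dist_eq_norm]
        exact (mul_le_of_le_one_right dist_nonneg (hf i)).trans (dist_le_pi_dist y z i)
    _ = Fintype.card ι * dist y z := by simp

theorem exists_orthonormalBasis_zero_last {n : ℕ} (hE : finrank ℝ E = n + 2) {u v : E}
    (hu : ‖u‖ = 1) (hv : ‖v‖ = 1) (huv : ⟪u, v⟫ = 0) :
    ∃ b : OrthonormalBasis (Fin (n + 2)) ℝ E, b 0 = v ∧ b (Fin.last (n + 1)) = u := by
  have := Module.finite_of_finrank_eq_succ hE
  let f : Fin (n + 2) → E := fun i => if i = 0 then v else u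
  have hf : Orthonormal ℝ (({0, Fin.last (n + 1)} : Set (Fin (n + 2))).domRestrict f) := by
    rw [orthonormal_iff_ite]
    rintro ⟨i, hi⟩ ⟨j, hj⟩
    simp only [Set.mem_insert_iff, Set.mem_singleton_iff] at hi hj
    rcases hi with rfl | rfl <;> rcases hj with rfl | rfl <;>
      simp [f, Set.domRestrict, real_inner_comm, hu, hv, huv]
  obtain ⟨b, hb⟩ := hf.exists_orthonormalBasis_extension_of_card_eq (by simpa using hE)
  exact ⟨b, hb 0 (by simp), (hb _ (by simp)).trans (if_neg Fin.last_pos.ne')⟩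

theorem volume_Icc_neg_cons {n : ℕ} {a R : ℝ} (ha : 0 ≤ a) (hR : 0 ≤ R) :
    volume (Icc (-Fin.cons a fun _ => R) (Fin.cons a fun _ => R : Fin (n + 1) → ℝ)) =
      ENNReal.ofReal (2 ^ (n + 1) * a * R ^ n) := by
  rw [Real.volume_Icc_pi, Fin.prod_univ_succ]
  simp only [Pi.neg_apply, Fin.cons_zero, Fin.cons_succ, sub_neg_eq_add, Finset.prod_const,
    Finset.card_univ, Fintype.card_fin]
  rw [← ENNReal.ofReal_pow (by positivity), ← ENNReal.ofReal_mul (by positivity)]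
  congr 1
  ring

variable [MeasurableSpace E] [BorelSpace E]

theorem hausdorffMeasure_slab_le {n : ℕ} (b : OrthonormalBasis (Fin (n + 2)) ℝ E) {a R : ℝ}
    (ha : 0 ≤ a) (hR : 0 ≤ R) :
    μH[n + 1] {p : E | ⟪b (Fin.last (n + 1)), p⟫ = 0 ∧ |⟪b 0, p⟫| ≤ a ∧ ‖p‖ ≤ R} ≤
      ENNReal.ofReal ((2 * (n + 1)) ^ (n + 1) * a * R ^ n) := by
  set F : (Fin (n + 1) → ℝ) → E := fun y => ∑ i, y i • b i.castSucc
  set c : Fin (n + 1) → ℝ := Fin.cons a fun _ => R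
  have hsub : {p : E | ⟪b (Fin.last (n + 1)), p⟫ = 0 ∧ |⟪b 0, p⟫| ≤ a ∧ ‖p‖ ≤ R} ⊆
      F '' Icc (-c) c := by
    rintro p ⟨hp_last, hp_zero, hp_norm⟩
    refine ⟨fun i => ⟪b i.castSucc, p⟫, ?_, ?_⟩
    · rw [← pi_univ_Icc]
      intro i _
      dsimp only
      rw [Pi.neg_apply, mem_Icc, ← abs_le]
      cases i using Fin.cases with
      | zero => simpa [c] using hp_zero
      | succ j => simpa [c] using (abs_real_inner_le_norm _ _).trans (by simpa using hp_norm)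
    · simpa [F, Fin.sum_univ_castSucc, hp_last] using b.sum_repr' p
  have hF : LipschitzWith (n + 1 : ℕ) F := by
    simpa using lipschitzWith_sum_smul (fun i : Fin (n + 1) => b i.castSucc) fun i => by simp
  have hμ : μH[(n : ℝ) + 1] = (volume : Measure (Fin (n + 1) → ℝ)) := by
    simpa using hausdorffMeasure_pi_real (ι := Fin (n + 1))
  calc μH[n + 1] {p : E | ⟪b (Fin.last (n + 1)), p⟫ = 0 ∧ |⟪b 0, p⟫| ≤ a ∧ ‖p‖ ≤ R}
      ≤ μH[n + 1] (F '' Icc (-c) c) := measure_mono hsub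
    _ ≤ ((n + 1 : ℕ) : ℝ≥0∞) ^ ((n : ℝ) + 1) * μH[n + 1] (Icc (-c) c) := by
        simpa only [ENNReal.coe_natCast] using
          hF.hausdorffMeasure_image_le (by positivity) (Icc (-c) c)
    _ = ENNReal.ofReal ((2 * (n + 1)) ^ (n + 1) * a * R ^ n) := by
        rw [hμ, volume_Icc_neg_cons ha hR, ← Nat.cast_add_one, ENNReal.rpow_natCast,
          ← ENNReal.ofReal_natCast, ← ENNReal.ofReal_pow (by positivity),
          ← ENNReal.ofReal_mul (by positivity), mul_pow]
        congr 1
        push_cast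
        ring

theorem hausdorffMeasure_orthogonal_slab_le {n : ℕ} (hE : finrank ℝ E = n + 2) {q w : E}
    (hq : q ≠ 0) (hw : w ≠ 0) (hqw : ⟪q, w⟫ = 0) {a R : ℝ} (ha : 0 ≤ a) (hR : 0 ≤ R) :
    μH[n + 1] {p : E | ⟪q, p⟫ = 0 ∧ |⟪w, p⟫| ≤ a ∧ ‖p‖ ≤ R} ≤
      ENNReal.ofReal ((2 * (n + 1)) ^ (n + 1) * (a / ‖w‖) * R ^ n) := by
  obtain ⟨b, hb0, hb_last⟩ := exists_orthonormalBasis_zero_last hE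
    (u := (‖q‖⁻¹ : ℝ) • q) (v := (‖w‖⁻¹ : ℝ) • w) (norm_smul_inv_norm hq) (norm_smul_inv_norm hw)
    (by simp [real_inner_smul_left, real_inner_smul_right, hqw])
  convert hausdorffMeasure_slab_le b (div_nonneg ha (norm_nonneg w)) hR using 3
  ext p
  simp [hb0, hb_last, real_inner_smul_left, abs_mul, hq, hw, le_div_iff₀, mul_comm]

end Slab

section Lattice

theorem Int.one_le_norm {m : ℤ} (hm : m ≠ 0) : 1 ≤ ‖m‖ := by
  rw [Int.norm_eq_abs]
  exact_mod_cast Int.one_le_abs hm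

variable {ι : Type*}

def intVec (z : ι → ℤ) : EuclideanSpace ℝ ι := WithLp.toLp 2 fun i => (z i : ℝ)

@[simp]
theorem intVec_apply (z : ι → ℤ) (i : ι) : intVec z i = z i := rfl

@[simp]
theorem intVec_zero : intVec (0 : ι → ℤ) = 0 := by
  ext
  simp

variable [Fintype ι]

theorem inner_intVec_left (z : ι → ℤ) (p : EuclideanSpace ℝ ι) :
    ⟪intVec z, p⟫ = ∑ i, (z i : ℝ) * p i := by
  simp [PiLp.inner_apply, mul_comm]

theorem one_le_norm_intVec {z : ι → ℤ} (hz : z ≠ 0) : 1 ≤ ‖intVec z‖ := by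
  obtain ⟨i, hi⟩ := Function.ne_iff.mp hz
  calc 1 ≤ ‖z i‖ := Int.one_le_norm hi
    _ ≤ ‖intVec z‖ := by simpa [Int.norm_eq_abs] using PiLp.norm_apply_le (intVec z) i

theorem hausdorffMeasure_int_slab_le {n : ℕ} (hι : Fintype.card ι = n + 2) {q : ι → ℤ}
    (hq : q ≠ 0) (y : ι → ℤ) {δ R : ℝ} (hδ : 0 ≤ δ) (hR : 0 ≤ R) :
    μH[n + 1] {p : EuclideanSpace ℝ ι | ⟪intVec q, p⟫ = 0 ∧ 0 < |⟪intVec y, p⟫| ∧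
        |⟪intVec y, p⟫| ≤ δ ∧ ‖p‖ ≤ R} ≤
      ENNReal.ofReal ((2 * (n + 1)) ^ (n + 1) * (‖intVec q‖ ^ 2 * δ) * R ^ n) := by
  set Q := intVec q
  set Y := intVec y
  -- `‖Q‖² Y - ⟪Q, Y⟫ Q` is the projection of `Y` to `Q^⊥`, scaled to become an integer vector.
  set z : ι → ℤ := (∑ i, q i * q i) • y - (∑ i, q i * y i) • q
  have hz : intVec z = ⟪Q, Q⟫ • Y - ⟪Q, Y⟫ • Q := by
    ext i
    simp only [z, Q, Y, inner_intVec_left, intVec_apply, PiLp.sub_apply, PiLp.smul_apply,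
      Pi.sub_apply, Pi.smul_apply, smul_eq_mul, Int.cast_sub, Int.cast_mul, Int.cast_sum]
  have hQz : ⟪Q, intVec z⟫ = 0 := by
    rw [hz, inner_sub_right, real_inner_smul_right, real_inner_smul_right]
    ring
  have hzp : ∀ p, ⟪Q, p⟫ = 0 → ⟪intVec z, p⟫ = ‖Q‖ ^ 2 * ⟪Y, p⟫ := fun p hp => by
    rw [hz, inner_sub_left, real_inner_smul_left, real_inner_smul_left, hp,
      real_inner_self_eq_norm_sq, mul_zero, sub_zero]
  have hQ : Q ≠ 0 := norm_pos_iff.mp (one_pos.trans_le (one_le_norm_intVec hq))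
  obtain hz0 | hz0 := eq_or_ne z 0
  · refine (measure_mono_null (fun p hp_mem => ?_) measure_empty).trans_le bot_le
    obtain ⟨hp, hpos, -⟩ := hp_mem
    have h := hzp p hp
    rw [hz0, intVec_zero, inner_zero_left, eq_comm, mul_eq_zero] at h
    simp_all
  have hW : 1 ≤ ‖intVec z‖ := one_le_norm_intVec hz0
  calc _ ≤ μH[n + 1] {p | ⟪Q, p⟫ = 0 ∧ |⟪intVec z, p⟫| ≤ ‖Q‖ ^ 2 * δ ∧ ‖p‖ ≤ R} := by
        refine measure_mono fun p ⟨hp, _, hpδ, hpR⟩ => ⟨hp, ?_, hpR⟩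
        rw [hzp p hp, abs_mul, abs_of_nonneg (by positivity)]
        gcongr
    _ ≤ ENNReal.ofReal ((2 * (n + 1)) ^ (n + 1) * (‖Q‖ ^ 2 * δ / ‖intVec z‖) * R ^ n) :=
        hausdorffMeasure_orthogonal_slab_le (by simp [hι]) hQ
          (norm_pos_iff.mp (one_pos.trans_le hW)) hQz (by positivity) hR
    _ ≤ ENNReal.ofReal ((2 * (n + 1)) ^ (n + 1) * (‖Q‖ ^ 2 * δ) * R ^ n) := by
        gcongr
        exact div_le_self (by positivity) hW

theorem hausdorffMeasure_limsup_int_slab_eq_zero {X : Type*} [Countable X] {n : ℕ}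
    (hι : Fintype.card ι = n + 2) {q : ι → ℤ} (hq : q ≠ 0) (y : X → ι → ℤ) {δ : X → ℝ}
    (hδ0 : ∀ x, 0 ≤ δ x) (hδ : Summable δ) {R : ℝ} (hR : 0 ≤ R) :
    μH[n + 1] (limsup (fun x => {p : EuclideanSpace ℝ ι | ⟪intVec q, p⟫ = 0 ∧
        0 < |⟪intVec (y x), p⟫| ∧ |⟪intVec (y x), p⟫| ≤ δ x ∧ ‖p‖ ≤ R}) cofinite) = 0 := by
  set C : ℝ := (2 * (n + 1)) ^ (n + 1)
  refine measure_limsup_cofinite_eq_zero (ne_top_of_le_ne_top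
    (ENNReal.ofReal_ne_top (r := ∑' x, C * (‖intVec q‖ ^ 2 * δ x) * R ^ n)) ?_)
  calc _ ≤ ∑' x, ENNReal.ofReal (C * (‖intVec q‖ ^ 2 * δ x) * R ^ n) :=
        ENNReal.tsum_le_tsum fun x => hausdorffMeasure_int_slab_le hι hq (y x) (hδ0 x) hR
    _ = ENNReal.ofReal (∑' x, C * (‖intVec q‖ ^ 2 * δ x) * R ^ n) :=
        (ENNReal.ofReal_tsum_of_nonneg (fun x => by have := hδ0 x; positivity)
          (((hδ.mul_left _).mul_left _).mul_right _)).symm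

end Lattice

section Quadric

theorem norm_int4 (x : ℤ × ℤ × ℤ × ℤ) :
    ‖x‖ = max (max (|x.1| : ℝ) (|x.2.1| : ℝ)) (max (|x.2.2.1| : ℝ) (|x.2.2.2| : ℝ)) := by
  simp only [Prod.norm_def, Int.norm_eq_abs, max_assoc]

theorem one_le_norm_int4 {x : ℤ × ℤ × ℤ × ℤ} (hx : x ≠ 0) : 1 ≤ ‖x‖ := by
  obtain ⟨a, b, c, d⟩ := x
  simp only [ne_eq, Prod.mk_eq_zero, not_and_or] at hx
  simp only [Prod.norm_def, le_max_iff]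
  rcases hx with h | h | h | h <;> simp [Int.one_le_norm h]

theorem summable_norm_int4_rpow {r : ℝ} (hr : 4 < r) :
    Summable fun x : ℤ × ℤ × ℤ × ℤ => ‖x‖ ^ (-r) := by
  set t := r / 4 with ht_def
  have ht : 1 < t := by rw [ht_def]; linarith
  let f : ℤ → ℝ := fun m => max ‖m‖ 1 ^ (-t)
  have hf : Summable f := by
    refine (Real.summable_abs_int_rpow ht).congr_cofinite ?_
    filter_upwards [eventually_cofinite_ne 0] with m hm
    simp only [f]
    rw [max_eq_left (Int.one_le_norm hm), Int.norm_eq_abs]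
  have hf0 : ∀ m, 0 ≤ f m := fun m => by positivity
  have hprod : Summable fun x : ℤ × ℤ × ℤ × ℤ => f x.1 * (f x.2.1 * (f x.2.2.1 * f x.2.2.2)) :=
    hf.mul_of_nonneg (hf.mul_of_nonneg (hf.mul_of_nonneg hf hf0 hf0) hf0 fun _ => by positivity)
      hf0 fun _ => by positivity
  refine hprod.of_nonneg_of_le (fun x => by positivity) fun x => ?_
  obtain rfl | hx := eq_or_ne x 0
  · rw [norm_zero, Real.zero_rpow (by linarith)]
    positivity
  have hx1 := one_le_norm_int4 hx
  have hcoord : ∀ m : ℤ, ‖m‖ ≤ ‖x‖ → ‖x‖ ^ (-t) ≤ f m := fun m hm =>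
    Real.rpow_le_rpow_of_nonpos (by positivity) (max_le hm hx1) (by linarith)
  calc ‖x‖ ^ (-r) = ‖x‖ ^ (-t) * (‖x‖ ^ (-t) * (‖x‖ ^ (-t) * ‖x‖ ^ (-t))) := by
        simp only [← Real.rpow_add (one_pos.trans_le hx1)]
        congr 1
        ring
    _ ≤ f x.1 * (f x.2.1 * (f x.2.2.1 * f x.2.2.2)) := by
        gcongr ?_ * (?_ * (?_ * ?_))
        · exact hcoord _ (norm_fst_le x)
        · exact hcoord _ ((norm_fst_le x.2).trans (norm_snd_le x))
        · exact hcoord _ ((norm_fst_le x.2.2).trans ((norm_snd_le x.2).trans (norm_snd_le x)))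
        · exact hcoord _ ((norm_snd_le x.2.2).trans ((norm_snd_le x.2).trans (norm_snd_le x)))

/-- `ψ (n₁, n₂, m₁, m₂) = (n₂², n₁n₂, n₁², m₂², m₁m₂, m₁²)`. -/
def ψ (x : ℤ × ℤ × ℤ × ℤ) : Fin 6 → ℤ :=
  ![x.2.1 ^ 2, x.1 * x.2.1, x.1 ^ 2, x.2.2.2 ^ 2, x.2.2.1 * x.2.2.2, x.2.2.1 ^ 2]

@[simp]
theorem ψ_zero : ψ 0 = 0 := by
  simp [ψ]

theorem inner_intVec_ψ (x : ℤ × ℤ × ℤ × ℤ) (p : EuclideanSpace ℝ (Fin 6)) :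
    ⟪intVec (ψ x), p⟫ =
      p 0 * (x.2.1 : ℝ) ^ 2 + p 1 * (x.1 : ℝ) * (x.2.1 : ℝ) + p 2 * (x.1 : ℝ) ^ 2 +
        p 3 * (x.2.2.2 : ℝ) ^ 2 + p 4 * (x.2.2.1 : ℝ) * (x.2.2.2 : ℝ) +
        p 5 * (x.2.2.1 : ℝ) ^ 2 := by
  simp only [inner_intVec_left, Fin.sum_univ_six, ψ]
  push_cast
  ring

end Quadric

theorem stmt_4 (q : Fin 6 → ℤ) (hq : q ≠ 0) :
    μH[5] {p : EuclideanSpace ℝ (Fin 6) |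
        (∑ i, (q i : ℝ) * p i) = 0 ∧
        ∃ ε > (0 : ℝ),
          {x : ℤ × ℤ × ℤ × ℤ |
            0 < |p 0 * (x.2.1 : ℝ) ^ 2 + p 1 * (x.1 : ℝ) * (x.2.1 : ℝ) +
                  p 2 * (x.1 : ℝ) ^ 2 + p 3 * (x.2.2.2 : ℝ) ^ 2 +
                  p 4 * (x.2.2.1 : ℝ) * (x.2.2.2 : ℝ) + p 5 * (x.2.2.1 : ℝ) ^ 2| ∧
            |p 0 * (x.2.1 : ℝ) ^ 2 + p 1 * (x.1 : ℝ) * (x.2.1 : ℝ) +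
                  p 2 * (x.1 : ℝ) ^ 2 + p 3 * (x.2.2.2 : ℝ) ^ 2 +
                  p 4 * (x.2.2.1 : ℝ) * (x.2.2.2 : ℝ) + p 5 * (x.2.2.1 : ℝ) ^ 2| ≤
              (max (max (|x.1| : ℝ) (|x.2.1| : ℝ)) (max (|x.2.2.1| : ℝ) (|x.2.2.2| : ℝ))) ^ (-4 - ε)
            }.Infinite} = 0 := by
  rw [show (5 : ℝ) = (4 : ℕ) + 1 by norm_num]
  have hnull : ∀ k m : ℕ, μH[(4 : ℕ) + 1] (limsup (fun x => {p : EuclideanSpace ℝ (Fin 6) |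
      ⟪intVec q, p⟫ = 0 ∧ 0 < |⟪intVec (ψ x), p⟫| ∧
      |⟪intVec (ψ x), p⟫| ≤ ‖x‖ ^ (-(4 + 1 / ((k : ℝ) + 1))) ∧ ‖p‖ ≤ m}) cofinite) = 0 :=
    fun k m => hausdorffMeasure_limsup_int_slab_eq_zero (by simp) hq ψ (fun x => by positivity)
      (summable_norm_int4_rpow (by simp; positivity)) m.cast_nonneg
  refine measure_mono_null ?_ (measure_iUnion_null fun k => measure_iUnion_null (hnull k))
  rintro p ⟨hp, ε, hε, hinf⟩
  obtain ⟨k, hk⟩ := exists_nat_one_div_lt hε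
  simp only [mem_iUnion, mem_limsup_iff_frequently_mem, frequently_cofinite_iff_infinite]
  refine ⟨k, ⌈‖p‖⌉₊, hinf.mono fun x hx => ?_⟩
  obtain ⟨hpos, hle⟩ := hx
  rw [← inner_intVec_ψ] at hpos hle
  rw [← norm_int4] at hle
  have hx : x ≠ 0 := by rintro rfl; simp at hpos
  exact ⟨by rwa [inner_intVec_left], hpos,
    hle.trans (Real.rpow_le_rpow_of_exponent_le (one_le_norm_int4 hx) (by linarith)), Nat.le_ceil _⟩
end

section
/- The map Φ(a,b,c,d,e,f) = (a/(4ac-b²), -b/(4ac-b²), c/(4ac-b²), -d/(4df-e²), e/(4df-e²), -f/(4df-e²)) on the open set {4ac > b², 4df > e²} ⊂ ℝ⁶ has Jacobian determinant equal to -1/((4ac-b²)³(4df-e²)³), which is everywhere nonzero. -/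
/-!
Up to the splitting `ℝ⁶ = ℝ³ × ℝ³`, `Phi` is the product of two maps of the form
`y ↦ D y / Q y`, with `D` diagonal and `Q y = 4 y₀ y₂ - y₁²` a quadratic form. The derivative of
such a map is `Q⁻¹ • D ∘ (1 - y ⊗ dQ_y / Q y)`, and Euler's relation `dQ_y y = 2 Q y` together with
the matrix determinant lemma gives the rank-one factor determinant `1 - 2 = -1`. Hence each block
has Jacobian `-det D / Q³`, which is `1 / (4ac - b²)³` for the first block and
`-1 / (4df - e²)³` for the second.
-/

noncomputable def Phi : (Fin 6 → ℝ) → (Fin 6 → ℝ) := fun p =>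
  ![p 0 / (4 * p 0 * p 2 - p 1 ^ 2),
    -p 1 / (4 * p 0 * p 2 - p 1 ^ 2),
    p 2 / (4 * p 0 * p 2 - p 1 ^ 2),
    -p 3 / (4 * p 3 * p 5 - p 4 ^ 2),
    p 4 / (4 * p 3 * p 5 - p 4 ^ 2),
    -p 5 / (4 * p 3 * p 5 - p 4 ^ 2)]

open ContinuousLinearMap Module

theorem LinearMap.det_one_add_smulRight {R M : Type*} [CommRing R] [AddCommGroup M] [Module R M]
    [Module.Free R M] [Module.Finite R M] (ℓ : M →ₗ[R] R) (v : M) :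
    LinearMap.det (1 + ℓ.smulRight v) = 1 + ℓ v := by
  classical
  let b := Module.Free.chooseBasis R M
  have hrank_one : LinearMap.toMatrix b b (ℓ.smulRight v) =
      Matrix.replicateCol Unit (b.repr v) * Matrix.replicateRow Unit (fun j => ℓ (b j)) := by
    ext i j
    simp [LinearMap.toMatrix_apply, Matrix.mul_apply, mul_comm]
  rw [← LinearMap.det_toMatrix b, map_add, LinearMap.toMatrix_one, hrank_one,
    Matrix.det_one_add_replicateCol_mul_replicateRow]
  conv_rhs => rw [← b.sum_repr v, map_sum]
  simp [dotProduct, mul_comm]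

section InvSmulOfBilinear

variable {E : Type*} [NormedAddCommGroup E] [NormedSpace ℝ E]

theorem hasFDerivAt_inv_smul_of_bilinear (A : E →L[ℝ] E) (B : E →L[ℝ] E →L[ℝ] ℝ) {x : E}
    (hx : B x x ≠ 0) :
    HasFDerivAt (fun y => (B y y)⁻¹ • A y)
      ((B x x)⁻¹ • A ∘L (1 - ((B x x)⁻¹ • (B x + B.flip x)).smulRight x)) x := by
  have hQ : HasFDerivAt (fun y => B y y) (B x + B.flip x) x := by
    refine (B.hasFDerivAt_of_bilinear (hasFDerivAt_id x) (hasFDerivAt_id x)).congr_fderiv ?_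
    ext w
    simp
  have hinv : HasFDerivAt (fun y => (B y y)⁻¹) _ x :=
    HasFDerivAt.comp (f := fun y => B y y) x (hasFDerivAt_inv hx) hQ
  refine (hinv.smul A.hasFDerivAt).congr_fderiv ?_
  ext w
  simp only [sq, mul_inv_rev, add_apply, smul_apply, smulRight_apply, comp_apply,
    toSpanSingleton_apply, smul_eq_mul, flip_apply, comp_sub, sub_apply, one_apply_eq_self,
    map_smul]
  module

theorem det_fderiv_inv_smul_of_bilinear [FiniteDimensional ℝ E] (A : E →L[ℝ] E)
    (B : E →L[ℝ] E →L[ℝ] ℝ) {x : E} (hx : B x x ≠ 0) :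
    (fderiv ℝ (fun y => (B y y)⁻¹ • A y) x).det = -A.det / B x x ^ finrank ℝ E := by
  rw [(hasFDerivAt_inv_smul_of_bilinear A B hx).fderiv]
  set ℓ : E →L[ℝ] ℝ := (B x x)⁻¹ • (B x + B.flip x)
  -- Euler's relation for the quadratic form `y ↦ B y y`.
  have hℓ : ℓ x = 2 := by
    simp only [ℓ, smul_apply, add_apply, flip_apply, smul_eq_mul]
    field_simp
    ring
  have hsmulRight : ((ℓ.smulRight x : E →L[ℝ] E) : E →ₗ[ℝ] E) =
      -(-(ℓ : E →ₗ[ℝ] ℝ)).smulRight x := by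
    ext
    simp
  rw [det, toLinearMap_smul, toLinearMap_comp, toLinearMap_sub, toLinearMap_one, hsmulRight,
    sub_neg_eq_add, LinearMap.det_smul, LinearMap.det_comp, LinearMap.det_one_add_smulRight]
  simp only [LinearMap.neg_apply, coe_coe, hℓ]
  ring

end InvSmulOfBilinear

theorem det_fderiv_conj_prodMap {𝕜 E F G : Type*} [NontriviallyNormedField 𝕜]
    [NormedAddCommGroup E] [NormedSpace 𝕜 E] [NormedAddCommGroup F] [NormedSpace 𝕜 F]
    [NormedAddCommGroup G] [NormedSpace 𝕜 G] [FiniteDimensional 𝕜 F] [FiniteDimensional 𝕜 G]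
    (e : E ≃L[𝕜] F × G) {g : F → F} {h : G → G} {x : E} {y : F} {z : G} (hx : e x = (y, z))
    (hg : DifferentiableAt 𝕜 g y) (hh : DifferentiableAt 𝕜 h z) :
    (fderiv 𝕜 (fun x => e.symm (Prod.map g h (e x))) x).det =
      (fderiv 𝕜 g y).det * (fderiv 𝕜 h z).det := by
  obtain ⟨rfl, rfl⟩ := Prod.ext_iff.1 hx
  have hD := e.symm.hasFDerivAt.comp x
    ((hg.hasFDerivAt.prodMap (e x) hh.hasFDerivAt).comp x e.hasFDerivAt)
  rw [show (fun x => e.symm (Prod.map g h (e x))) = e.symm ∘ Prod.map g h ∘ e from rfl,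
    hD.fderiv]
  exact (LinearMap.det_conj _ e.symm.toLinearEquiv).trans (LinearMap.det_prodMap _ _)

def ContinuousLinearEquiv.finAddArrowProd (R : Type*) [Semiring R] [TopologicalSpace R]
    (m n : ℕ) : (Fin (m + n) → R) ≃L[R] (Fin m → R) × (Fin n → R) :=
  (ContinuousLinearEquiv.piCongrLeft R (fun _ => R) finSumFinEquiv).symm.trans
    (ContinuousLinearEquiv.sumPiEquivProdPi R (Fin m) (Fin n) fun _ => R)

theorem ContinuousLinearEquiv.finAddArrowProd_apply (R : Type*) [Semiring R]
    [TopologicalSpace R] {m n : ℕ} (x : Fin (m + n) → R) :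
    finAddArrowProd R m n x = (fun i => x (Fin.castAdd n i), fun i => x (Fin.natAdd m i)) :=
  rfl

theorem ContinuousLinearEquiv.finAddArrowProd_symm_apply (R : Type*) [Semiring R]
    [TopologicalSpace R] {m n : ℕ} (y : Fin m → R) (z : Fin n → R) :
    (finAddArrowProd R m n).symm (y, z) = Fin.append y z := by
  rw [ContinuousLinearEquiv.symm_apply_eq, finAddArrowProd_apply]
  ext i
  · exact (Fin.append_left y z i).symm
  · exact (Fin.append_right y z i).symm

noncomputable def negDiscrBilin : (Fin 3 → ℝ) →L[ℝ] (Fin 3 → ℝ) →L[ℝ] ℝ :=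
  (4 : ℝ) • (proj 0).smulRight (proj 2) - (proj 1).smulRight (proj 1)

theorem negDiscrBilin_apply (x y : Fin 3 → ℝ) :
    negDiscrBilin x y = 4 * x 0 * y 2 - x 1 * y 1 := by
  simp [negDiscrBilin, mul_assoc]

noncomputable def diagonalCLM {n : ℕ} (s : Fin n → ℝ) : (Fin n → ℝ) →L[ℝ] (Fin n → ℝ) :=
  LinearMap.toContinuousLinearMap (Matrix.toLin' (Matrix.diagonal s))

theorem diagonalCLM_apply {n : ℕ} (s x : Fin n → ℝ) : diagonalCLM s x = s * x := by
  ext i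
  simp [diagonalCLM, Matrix.mulVec_diagonal]

theorem det_diagonalCLM {n : ℕ} (s : Fin n → ℝ) : (diagonalCLM s).det = ∏ i, s i := by
  simp [diagonalCLM, LinearMap.det_toLin']

noncomputable def diagonalDivNegDiscr (s : Fin 3 → ℝ) : (Fin 3 → ℝ) → Fin 3 → ℝ :=
  fun y => (negDiscrBilin y y)⁻¹ • diagonalCLM s y

theorem differentiableAt_diagonalDivNegDiscr (s : Fin 3 → ℝ) {y : Fin 3 → ℝ}
    (hy : negDiscrBilin y y ≠ 0) : DifferentiableAt ℝ (diagonalDivNegDiscr s) y :=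
  (hasFDerivAt_inv_smul_of_bilinear _ _ hy).differentiableAt

theorem det_fderiv_diagonalDivNegDiscr (s : Fin 3 → ℝ) {y : Fin 3 → ℝ}
    (hy : negDiscrBilin y y ≠ 0) :
    (fderiv ℝ (diagonalDivNegDiscr s) y).det = -(∏ i, s i) / negDiscrBilin y y ^ 3 := by
  unfold diagonalDivNegDiscr
  rw [det_fderiv_inv_smul_of_bilinear _ _ hy, det_diagonalCLM, finrank_fin_fun]

theorem Phi_eq_conj_prodMap : Phi = fun p => (ContinuousLinearEquiv.finAddArrowProd ℝ 3 3).symm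
    (Prod.map (diagonalDivNegDiscr ![1, -1, 1]) (diagonalDivNegDiscr ![-1, 1, -1])
      (ContinuousLinearEquiv.finAddArrowProd ℝ 3 3 p)) := by
  funext p
  ext i
  simp only [ContinuousLinearEquiv.finAddArrowProd_apply, Prod.map,
    ContinuousLinearEquiv.finAddArrowProd_symm_apply]
  refine Fin.addCases (m := 3) (n := 3) (fun j => ?_) (fun j => ?_) i <;>
    simp only [Fin.append_left, Fin.append_right] <;>
    fin_cases j <;>
    simp [Phi, diagonalDivNegDiscr, diagonalCLM_apply, negDiscrBilin_apply, div_eq_inv_mul, sq]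

theorem stmt_5 (a b c d e f : ℝ) (h1 : b ^ 2 < 4 * a * c) (h2 : e ^ 2 < 4 * d * f) :
    LinearMap.det ((fderiv ℝ Phi ![a, b, c, d, e, f]).toLinearMap) =
        -1 / ((4 * a * c - b ^ 2) ^ 3 * (4 * d * f - e ^ 2) ^ 3) ∧
      LinearMap.det ((fderiv ℝ Phi ![a, b, c, d, e, f]).toLinearMap) ≠ 0 := by
  have hsplit : ContinuousLinearEquiv.finAddArrowProd ℝ 3 3 ![a, b, c, d, e, f] =
      (![a, b, c], ![d, e, f]) := by
    ext i <;> fin_cases i <;> rfl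
  have hu : negDiscrBilin ![a, b, c] ![a, b, c] = 4 * a * c - b ^ 2 := by
    simp [negDiscrBilin_apply, sq]
  have hv : negDiscrBilin ![d, e, f] ![d, e, f] = 4 * d * f - e ^ 2 := by
    simp [negDiscrBilin_apply, sq]
  have hu₀ : 0 < 4 * a * c - b ^ 2 := sub_pos.2 h1
  have hv₀ : 0 < 4 * d * f - e ^ 2 := sub_pos.2 h2
  have hdet : (fderiv ℝ Phi ![a, b, c, d, e, f]).det =
      -1 / ((4 * a * c - b ^ 2) ^ 3 * (4 * d * f - e ^ 2) ^ 3) := by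
    rw [Phi_eq_conj_prodMap, det_fderiv_conj_prodMap _ hsplit
      (differentiableAt_diagonalDivNegDiscr _ (hu ▸ hu₀.ne'))
      (differentiableAt_diagonalDivNegDiscr _ (hv ▸ hv₀.ne')),
      det_fderiv_diagonalDivNegDiscr _ (hu ▸ hu₀.ne'),
      det_fderiv_diagonalDivNegDiscr _ (hv ▸ hv₀.ne'), hu, hv]
    simp only [Fin.prod_univ_three, Matrix.cons_val]
    field_simp
  exact ⟨hdet, hdet.trans_ne (div_ne_zero (by norm_num) (by positivity))⟩
end

section
/- Let κ > 3 and let α be an irrational real number such that |k - ℓα| ≫ |ℓ|^{-(κ-1)/2} for all integers k, ℓ with ℓ ≠ 0 and k ≠ ℓα. Define Y₁(n₁,n₂) = √(n₁² - n₁n₂ + n₂²) and Y₂(m₁,m₂) = √(m₁² + m₂²/α). Then there exists c > 0 such that for all nonzero n, m ∈ ℤ² with |n₁|,|n₂|,|m₁|,|m₂| ≤ M and Y₁(n) ≠ Y₂(m), one has |Y₁(n) - Y₂(m)| ≥ c·M^{-κ}. -/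
set_option maxHeartbeats 1000000 in
theorem stmt_7 (κ : ℝ) (hκ : 3 < κ) (α : ℝ) (hα : 0 < α) (hirr : Irrational α)
    (hdioph : ∃ c' > (0 : ℝ), ∀ k l : ℤ, l ≠ 0 → (k : ℝ) ≠ (l : ℝ) * α →
      c' * |(l : ℝ)| ^ (-(κ - 1) / 2) ≤ |(k : ℝ) - (l : ℝ) * α|) :
    ∃ c > (0 : ℝ), ∀ M : ℝ, 1 ≤ M → ∀ n₁ n₂ m₁ m₂ : ℤ,
      (n₁, n₂) ≠ (0, 0) → (m₁, m₂) ≠ (0, 0) →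
      |(n₁ : ℝ)| ≤ M → |(n₂ : ℝ)| ≤ M → |(m₁ : ℝ)| ≤ M → |(m₂ : ℝ)| ≤ M →
      Real.sqrt ((n₁ : ℝ) ^ 2 - n₁ * n₂ + (n₂ : ℝ) ^ 2) ≠
        Real.sqrt ((m₁ : ℝ) ^ 2 + (m₂ : ℝ) ^ 2 / α) →
      c * M ^ (-κ) ≤
        |Real.sqrt ((n₁ : ℝ) ^ 2 - n₁ * n₂ + (n₂ : ℝ) ^ 2) -
          Real.sqrt ((m₁ : ℝ) ^ 2 + (m₂ : ℝ) ^ 2 / α)| := by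
  obtain ⟨c', hc', hdio⟩ := hdioph
  set s : ℝ := (κ - 1) / 2 with hs
  have hs0 : 0 ≤ s := by rw [hs]; linarith
  set D : ℝ := Real.sqrt 3 + Real.sqrt (1 + 1 / α) with hD
  have hD0 : 0 < D := by
    rw [hD]
    have h1 : (0:ℝ) < Real.sqrt 3 := Real.sqrt_pos.mpr (by norm_num)
    have h2 : (0:ℝ) ≤ Real.sqrt (1 + 1/α) := Real.sqrt_nonneg _
    linarith
  have h4s : (0:ℝ) < (4:ℝ) ^ (-s) := Real.rpow_pos_of_pos (by norm_num) _
  set cm : ℝ := min (1 / α) (c' * (4:ℝ) ^ (-s) / α) with hcm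
  have hcm0 : 0 < cm := lt_min (by positivity) (by positivity)
  refine ⟨cm / D, by positivity, ?_⟩
  intro M hM n₁ n₂ m₁ m₂ hn hm hn1 hn2 hm1 hm2 hne
  have hM0 : (0:ℝ) < M := lt_of_lt_of_le one_pos hM
  set A : ℤ := n₁ ^ 2 - n₁ * n₂ + n₂ ^ 2 with hAdef
  have hA1 : 1 ≤ A := by
    rcases lt_trichotomy A 0 with h | h | h
    · exfalso; nlinarith [sq_nonneg (n₁ - n₂), sq_nonneg n₁, sq_nonneg n₂]
    · exfalso
      have hn₁ : n₁ = 0 := by nlinarith [sq_nonneg (n₁ - n₂), sq_nonneg n₁, sq_nonneg n₂, sq_nonneg (n₁ + n₂)]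
      have hn₂ : n₂ = 0 := by nlinarith [sq_nonneg (n₁ - n₂), sq_nonneg n₁, sq_nonneg n₂, sq_nonneg (n₁ + n₂)]
      exact hn (by simp [hn₁, hn₂])
    · omega
  set B : ℝ := (m₁ : ℝ) ^ 2 + (m₂ : ℝ) ^ 2 / α with hBdef
  have hB0 : 0 ≤ B := by positivity
  have hAR : ((A : ℝ)) = (n₁ : ℝ) ^ 2 - (n₁ : ℝ) * n₂ + (n₂ : ℝ) ^ 2 := by
    rw [hAdef]; push_cast; ring
  have hAR0 : (0:ℝ) < (A : ℝ) := by exact_mod_cast hA1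
  set a : ℝ := Real.sqrt ((n₁ : ℝ) ^ 2 - (n₁:ℝ) * n₂ + (n₂ : ℝ) ^ 2) with ha
  set b : ℝ := Real.sqrt B with hb
  have ha2 : a ^ 2 = (A : ℝ) := by
    rw [ha, ← hAR, Real.sq_sqrt hAR0.le]
  have hb2 : b ^ 2 = B := Real.sq_sqrt hB0
  have ha0 : 0 < a := Real.sqrt_pos.mpr (by rw [← hAR]; exact hAR0)
  have hb0 : 0 ≤ b := Real.sqrt_nonneg _
  -- bounds
  have hn1' : (n₁:ℝ)^2 ≤ M^2 := by
    rw [← sq_abs]; exact pow_le_pow_left₀ (abs_nonneg _) hn1 2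
  have hn2' : (n₂:ℝ)^2 ≤ M^2 := by
    rw [← sq_abs]; exact pow_le_pow_left₀ (abs_nonneg _) hn2 2
  have hm1' : (m₁:ℝ)^2 ≤ M^2 := by
    rw [← sq_abs]; exact pow_le_pow_left₀ (abs_nonneg _) hm1 2
  have hm2' : (m₂:ℝ)^2 ≤ M^2 := by
    rw [← sq_abs]; exact pow_le_pow_left₀ (abs_nonneg _) hm2 2
  have hAle : (A : ℝ) ≤ 3 * M ^ 2 := by
    rw [hAR]
    have h1 : -((n₁:ℝ) * n₂) ≤ |(n₁:ℝ) * n₂| := neg_le_abs _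
    have h2 : |(n₁:ℝ) * n₂| ≤ M * M := by
      rw [abs_mul]; exact mul_le_mul hn1 hn2 (abs_nonneg _) hM0.le
    nlinarith
  have haM : a ≤ Real.sqrt 3 * M := by
    rw [ha, ← hAR]
    calc Real.sqrt (A:ℝ) ≤ Real.sqrt (3 * M ^ 2) := Real.sqrt_le_sqrt hAle
      _ = Real.sqrt 3 * M := by
          rw [Real.sqrt_mul (by norm_num), Real.sqrt_sq hM0.le]
  have hbM : b ≤ Real.sqrt (1 + 1/α) * M := by
    rw [hb]
    have hBle : B ≤ (1 + 1/α) * M ^ 2 := by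
      rw [hBdef]
      have h1 : (m₂:ℝ)^2 / α ≤ M^2 / α := by gcongr
      have h2 : (1+1/α)*M^2 = M^2 + M^2/α := by ring
      rw [h2]
      linarith
    calc Real.sqrt B ≤ Real.sqrt ((1 + 1/α) * M ^ 2) := Real.sqrt_le_sqrt hBle
      _ = Real.sqrt (1 + 1/α) * M := by
          rw [Real.sqrt_mul (by positivity), Real.sqrt_sq hM0.le]
  have habD : a + b ≤ D * M := by
    rw [hD, add_mul]; exact add_le_add haM hbM
  have hab_pos : 0 < a + b := by linarith
  have hprod : |a - b| * (a + b) = |(A : ℝ) - B| := by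
    have : |a - b| * (a + b) = |(a - b) * (a + b)| := by
      rw [abs_mul, abs_of_pos hab_pos]
    rw [this]
    congr 1
    have h := ha2
    have h2 := hb2
    nlinarith [h, h2]
  -- key lower bound
  have hMker : M ^ (-(κ - 1)) ≤ 1 :=
    Real.rpow_le_one_of_one_le_of_nonpos hM (by linarith)
  have hMker0 : 0 < M ^ (-(κ - 1)) := Real.rpow_pos_of_pos hM0 _
  have key : cm * M ^ (-(κ - 1)) ≤ |(A : ℝ) - B| := by
    by_cases hl : A - m₁ ^ 2 = 0
    · -- then B - A = m₂²/α, and m₂ ≠ 0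
      have hAm : (A : ℝ) = (m₁ : ℝ) ^ 2 := by
        have : ((A - m₁ ^ 2 : ℤ) : ℝ) = 0 := by rw [hl]; simp
        push_cast at this; linarith
      have hm₂ : m₂ ≠ 0 := by
        intro h
        apply hne
        rw [ha, hb, hBdef, ← hAR, hAm, h]
        push_cast
        norm_num
      have hm₂1 : (1:ℝ) ≤ (m₂:ℝ)^2 := by
        have : 1 ≤ m₂ ^ 2 := by
          rcases lt_or_gt_of_ne hm₂ with h | h <;> nlinarith
        exact_mod_cast this
      have habs : |(A : ℝ) - B| = (m₂:ℝ)^2 / α := by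
        rw [hBdef, hAm, show (m₁:ℝ)^2 - ((m₁:ℝ)^2 + (m₂:ℝ)^2/α) = -((m₂:ℝ)^2/α) by ring,
          abs_neg, abs_of_nonneg (by positivity)]
      rw [habs]
      calc cm * M ^ (-(κ - 1)) ≤ (1/α) * 1 :=
            mul_le_mul (min_le_left _ _) hMker hMker0.le (by positivity)
        _ = 1 / α := mul_one _
        _ ≤ (m₂:ℝ)^2 / α := by gcongr
    · -- l ≠ 0 case : use the Diophantine hypothesis
      set l : ℤ := A - m₁ ^ 2 with hldef
      set k : ℤ := m₂ ^ 2 with hkdef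
      have hkl : (k : ℝ) ≠ (l : ℝ) * α := by
        intro h
        apply hirr
        refine ⟨(k : ℚ) / (l : ℚ), ?_⟩
        have hl0 : ((l:ℤ):ℝ) ≠ 0 := by exact_mod_cast hl
        push_cast
        field_simp
        linarith [h]
      have hd := hdio k l hl hkl
      have hlabs1 : (1:ℝ) ≤ |(l:ℝ)| := by
        have : 1 ≤ |l| := Int.one_le_abs hl
        calc (1:ℝ) ≤ ((|l| : ℤ) : ℝ) := by exact_mod_cast this
          _ = |(l:ℝ)| := by push_cast; ring
      have hlabs : |(l:ℝ)| ≤ 4 * M ^ 2 := by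
        have hlr : (l : ℝ) = (A:ℝ) - (m₁:ℝ)^2 := by rw [hldef]; push_cast; ring
        rw [hlr, abs_le]
        constructor <;> nlinarith
      have hpow : (4 * M ^ 2) ^ (-s) ≤ |(l:ℝ)| ^ (-s) := by
        apply Real.rpow_le_rpow_of_nonpos (by positivity) hlabs (by linarith)
      have hpow_eq : (4 * M ^ 2) ^ (-s) = (4:ℝ) ^ (-s) * M ^ (-(κ - 1)) := by
        rw [Real.mul_rpow (by norm_num) (by positivity)]
        congr 1
        rw [← Real.rpow_natCast M 2, ← Real.rpow_mul hM0.le]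
        congr 1
        rw [hs]; push_cast; ring
      have hABeq : |(A : ℝ) - B| = |(k:ℝ) - (l:ℝ) * α| / α := by
        have h1 : (A : ℝ) - B = ((l:ℝ) * α - (k:ℝ)) / α := by
          rw [hBdef, hldef, hkdef]
          push_cast
          field_simp
          ring
        rw [h1, abs_div, abs_of_pos hα, abs_sub_comm]
      have hexp : -(κ - 1) / 2 = -s := by rw [hs]; ring
      rw [hexp] at hd
      rw [hABeq]
      calc cm * M ^ (-(κ - 1)) ≤ (c' * (4:ℝ) ^ (-s) / α) * M ^ (-(κ - 1)) :=
            mul_le_mul_of_nonneg_right (min_le_right _ _) hMker0.le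
        _ = c' * ((4:ℝ) ^ (-s) * M ^ (-(κ - 1))) / α := by ring
        _ = c' * ((4 * M ^ 2) ^ (-s)) / α := by rw [hpow_eq]
        _ ≤ c' * |(l:ℝ)| ^ (-s) / α := by gcongr
        _ ≤ |(k:ℝ) - (l:ℝ) * α| / α := by gcongr
  -- final assembly
  have hMpow : M ^ (-κ) * (D * M) = D * M ^ (-(κ - 1)) := by
    have : M ^ (-κ) * M = M ^ (-(κ - 1)) := by
      nth_rewrite 2 [← Real.rpow_one M]
      rw [← Real.rpow_add hM0]
      congr 1; ring
    calc M ^ (-κ) * (D * M) = D * (M ^ (-κ) * M) := by ring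
      _ = D * M ^ (-(κ - 1)) := by rw [this]
  have hfinal : (cm / D) * M ^ (-κ) * (a + b) ≤ |a - b| * (a + b) := by
    rw [hprod]
    calc (cm / D) * M ^ (-κ) * (a + b) ≤ (cm / D) * M ^ (-κ) * (D * M) := by
          apply mul_le_mul_of_nonneg_left habD (by positivity)
      _ = (cm / D) * (M ^ (-κ) * (D * M)) := by ring
      _ = cm * M ^ (-(κ - 1)) := by rw [hMpow]; field_simp
      _ ≤ |(A : ℝ) - B| := key
  exact le_of_mul_le_mul_right hfinal hab_pos
end

section
/- Suppose r : ℕ → ℝ≥0 satisfies Σ_{k≤N} r(k) = A·N·log N + O(N) for a constant A > 0. Then for h → 0⁺, Σ_{k > 1/h} r(k)/k³ · sin²(πhk) = O(h² log(1/h)). -/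
/-!
Since `sin² ≤ 1` and `1 / h < k ↔ ⌊1 / h⌋₊ < k`, it suffices to bound `∑_{k > K} r k / k³` with
`K = ⌊1 / h⌋₊`. Abel summation turns this into `∑_{m > K} S m (m⁻³ - (m + 1)⁻³)` plus a boundary
term, where `S` is the partial-sum function of `r`. From `S m ≤ m (A log m + C)` and
`log m ≤ log K + m / K` every term is `O((log K + 1) / (K m²))`, and `∑_{m > K} m⁻² ≤ 1 / K`
gives `O(log K / K²) = O(h² log (1 / h))`.
-/

open Real Finset

theorem sum_Ioc_mul_by_parts {R : Type*} [CommRing R] (a w : ℕ → R) {K M : ℕ} (hKM : K ≤ M) :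
    ∑ k ∈ Ioc K M, a k * w k + (∑ j ∈ Icc 1 K, a j) * w (K + 1) =
      ∑ m ∈ Ioc K M, (∑ j ∈ Icc 1 m, a j) * (w m - w (m + 1)) +
        (∑ j ∈ Icc 1 M, a j) * w (M + 1) := by
  induction M, hKM using Nat.le_induction with
  | base => simp
  | succ M hKM ih =>
    rw [sum_Ioc_succ_top hKM, sum_Ioc_succ_top hKM, sum_Icc_succ_top (by omega : 1 ≤ M + 1)]
    linear_combination ih

theorem inv_pow_three_sub_inv_succ_pow_three_le {m : ℝ} (hm : 0 < m) :
    (m ^ 3)⁻¹ - ((m + 1) ^ 3)⁻¹ ≤ 3 / m ^ 4 := by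
  rw [inv_sub_inv (by positivity) (by positivity), div_le_div_iff₀ (by positivity) (by positivity)]
  nlinarith [pow_pos hm 3, pow_pos hm 4, pow_pos hm 5, pow_pos hm 6]

theorem mul_log_add_le_mul_div {A C K m : ℝ} (hA : 0 ≤ A) (hK : 0 < K) (hKm : K ≤ m)
    (hL : 0 ≤ A * log K + C) :
    A * log m + C ≤ (A * log K + A + C) * (m / K) := by
  have hm : 1 ≤ m / K := (one_le_div hK).2 hKm
  have hlog : log m ≤ log K + m / K := by
    have := log_le_sub_one_of_pos (div_pos (hK.trans_le hKm) hK)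
    rw [log_div (hK.trans_le hKm).ne' hK.ne'] at this
    linarith
  nlinarith [mul_le_mul_of_nonneg_left hlog hA]

theorem abs_tsum_ite_mul_sin_sq_le {p : ℕ → Prop} [DecidablePred p] {f : ℕ → ℝ}
    (hf : ∀ k, 0 ≤ f k) (hsum : Summable fun k ↦ if p k then f k else 0) (θ : ℕ → ℝ) :
    |∑' k, if p k then f k * sin (θ k) ^ 2 else 0| ≤ ∑' k, if p k then f k else 0 := by
  have hg_nonneg (k : ℕ) : 0 ≤ if p k then f k * sin (θ k) ^ 2 else 0 := by
    have := hf k; split_ifs <;> positivity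
  have hg_le (k : ℕ) : (if p k then f k * sin (θ k) ^ 2 else 0) ≤ if p k then f k else 0 := by
    split_ifs
    · exact mul_le_of_le_one_right (hf k) (sin_sq_le_one _)
    · rfl
  rw [abs_of_nonneg (tsum_nonneg hg_nonneg)]
  exact (hsum.of_nonneg_of_le hg_nonneg hg_le).tsum_le_tsum hg_le hsum

section TailEstimate

variable {r : ℕ → ℝ} {A C : ℝ}

theorem sum_Icc_le_mul_sq_div
    (hS : ∀ N : ℕ, 1 ≤ N → ∑ k ∈ Icc 1 N, r k ≤ A * N * log N + C * N)
    (hA : 0 ≤ A) (hC : 0 ≤ C) {K m : ℕ} (hK : 1 ≤ K) (hKm : K ≤ m) :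
    ∑ k ∈ Icc 1 m, r k ≤ (A * log K + A + C) * m ^ 2 / K := by
  have hK' : (1 : ℝ) ≤ K := by exact_mod_cast hK
  have hKm' : (K : ℝ) ≤ m := by exact_mod_cast hKm
  have hlog := mul_log_add_le_mul_div (C := C) hA (by positivity) hKm'
    (by have := log_nonneg hK'; positivity)
  calc ∑ k ∈ Icc 1 m, r k ≤ m * (A * log m + C) := by linarith [hS m (hK.trans hKm)]
    _ ≤ m * ((A * log K + A + C) * (m / K)) := by gcongr
    _ = (A * log K + A + C) * m ^ 2 / K := by ring

theorem sum_Ioc_div_pow_three_le (hr : ∀ k, 0 ≤ r k)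
    (hS : ∀ N : ℕ, 1 ≤ N → ∑ k ∈ Icc 1 N, r k ≤ A * N * log N + C * N)
    (hA : 0 ≤ A) (hC : 0 ≤ C) {K N : ℕ} (hK : 1 ≤ K) (hKN : K ≤ N) :
    ∑ k ∈ Ioc K N, r k / (k : ℝ) ^ 3 ≤ 3 * (A * log K + A + C) / K ^ 2 := by
  set L := A * log K + A + C
  set S : ℕ → ℝ := fun m ↦ ∑ j ∈ Icc 1 m, r j
  have hK' : (1 : ℝ) ≤ K := by exact_mod_cast hK
  have hL : 0 ≤ L := by have := log_nonneg hK'; positivity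
  have hS_nonneg : ∀ m, 0 ≤ S m := fun m ↦ sum_nonneg fun j _ ↦ hr j
  have hterm : ∀ m ∈ Ioc K N,
      S m * (((m : ℝ) ^ 3)⁻¹ - (((m + 1 : ℕ) : ℝ) ^ 3)⁻¹) ≤ 3 * L / K * ((m : ℝ) ^ 2)⁻¹ := by
    intro m hm
    have hKm : K ≤ m := (mem_Ioc.1 hm).1.le
    have hm' : (0 : ℝ) < m := by exact_mod_cast hK.trans hKm
    push_cast
    calc S m * (((m : ℝ) ^ 3)⁻¹ - ((m + 1 : ℝ) ^ 3)⁻¹)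
        ≤ L * m ^ 2 / K * (3 / m ^ 4) := by
          gcongr
          · have : ((m + 1 : ℝ) ^ 3)⁻¹ ≤ ((m : ℝ) ^ 3)⁻¹ := by gcongr; linarith
            linarith
          · exact sum_Icc_le_mul_sq_div hS hA hC hK hKm
          · exact inv_pow_three_sub_inv_succ_pow_three_le hm'
      _ = 3 * L / K * ((m : ℝ) ^ 2)⁻¹ := by field_simp
  have hboundary : S N * (((N + 1 : ℕ) : ℝ) ^ 3)⁻¹ ≤ L / K * (N : ℝ)⁻¹ := by
    have hN' : (0 : ℝ) < N := by exact_mod_cast hK.trans hKN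
    calc S N * (((N + 1 : ℕ) : ℝ) ^ 3)⁻¹ ≤ L * N ^ 2 / K * ((N : ℝ) ^ 3)⁻¹ := by
          gcongr
          · exact sum_Icc_le_mul_sq_div hS hA hC hK hKN
          · exact_mod_cast N.le_succ
      _ = L / K * (N : ℝ)⁻¹ := by field_simp
  have hparts := sum_Ioc_mul_by_parts r (fun k ↦ ((k : ℝ) ^ 3)⁻¹) hKN
  have hsq := sum_Ioc_inv_sq_le_sub (α := ℝ) (by omega : K ≠ 0) hKN
  have hN : (0 : ℝ) ≤ (N : ℝ)⁻¹ := by positivity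
  calc ∑ k ∈ Ioc K N, r k / (k : ℝ) ^ 3
      ≤ ∑ k ∈ Ioc K N, r k * ((k : ℝ) ^ 3)⁻¹ + S K * (((K + 1 : ℕ) : ℝ) ^ 3)⁻¹ := by
        simp only [div_eq_mul_inv, le_add_iff_nonneg_right]
        exact mul_nonneg (hS_nonneg K) (by positivity)
    _ ≤ 3 * L / K * ∑ m ∈ Ioc K N, ((m : ℝ) ^ 2)⁻¹ + L / K * (N : ℝ)⁻¹ := by
        rw [hparts, mul_sum]
        exact add_le_add (sum_le_sum hterm) hboundary
    _ ≤ 3 * L / K * ((K : ℝ)⁻¹ - (N : ℝ)⁻¹) + L / K * (N : ℝ)⁻¹ := by gcongr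
    _ ≤ 3 * L / K ^ 2 := by
        have : 0 ≤ L / K * (N : ℝ)⁻¹ := by positivity
        have : 3 * L / K * ((K : ℝ)⁻¹ - (N : ℝ)⁻¹) + L / K * (N : ℝ)⁻¹ =
            3 * L / K ^ 2 - 2 * (L / K * (N : ℝ)⁻¹) := by ring
        linarith

theorem sum_range_tail_div_pow_three_le (hr : ∀ k, 0 ≤ r k)
    (hS : ∀ N : ℕ, 1 ≤ N → ∑ k ∈ Icc 1 N, r k ≤ A * N * log N + C * N)
    (hA : 0 ≤ A) (hC : 0 ≤ C) {x : ℝ} (hx : 1 ≤ x) (n : ℕ) :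
    ∑ k ∈ range n, (if x < k then r k / (k : ℝ) ^ 3 else 0) ≤
      3 * (A * log ⌊x⌋₊ + A + C) / (⌊x⌋₊ : ℝ) ^ 2 := by
  have hK : 1 ≤ ⌊x⌋₊ := Nat.one_le_floor_iff x |>.2 hx
  rw [← sum_filter]
  refine (sum_le_sum_of_subset_of_nonneg ?_ fun k _ _ ↦ by have := hr k; positivity).trans
    (sum_Ioc_div_pow_three_le hr hS hA hC hK (Nat.le_add_right ⌊x⌋₊ n))
  intro k hk
  rw [mem_filter, mem_range, ← Nat.floor_lt (by linarith)] at hk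
  rw [mem_Ioc]
  omega

theorem tsum_tail_div_pow_three_le (hr : ∀ k, 0 ≤ r k)
    (hS : ∀ N : ℕ, 1 ≤ N → ∑ k ∈ Icc 1 N, r k ≤ A * N * log N + C * N)
    (hA : 0 ≤ A) (hC : 0 ≤ C) {x : ℝ} (hx : exp 1 ≤ x) :
    Summable (fun k : ℕ ↦ if x < k then r k / (k : ℝ) ^ 3 else 0) ∧
      ∑' k : ℕ, (if x < k then r k / (k : ℝ) ^ 3 else 0) ≤ 12 * (2 * A + C) * log x / x ^ 2 := by
  have hx2 : 2 ≤ x := by linarith [add_one_le_exp 1]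
  have hlogx : 1 ≤ log x := by rwa [le_log_iff_exp_le (by linarith)]
  set K := ⌊x⌋₊
  have hK : (1 : ℝ) ≤ K := by exact_mod_cast Nat.one_le_floor_iff x |>.2 (by linarith)
  have hKx : (K : ℝ) ≤ x := Nat.floor_le (by linarith)
  have hxK : x ≤ 2 * K := by linarith [Nat.sub_one_lt_floor x]
  have hL : A * log K + A + C ≤ (2 * A + C) * log x := by
    have := log_le_log (by linarith) hKx
    nlinarith
  have hF_nonneg (k : ℕ) : 0 ≤ if x < k then r k / (k : ℝ) ^ 3 else 0 := by
    have := hr k; split_ifs <;> positivity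
  have hbound : 3 * (A * log K + A + C) / (K : ℝ) ^ 2 ≤ 12 * (2 * A + C) * log x / x ^ 2 := by
    rw [div_le_div_iff₀ (by positivity) (by positivity)]
    have := log_nonneg hK
    have : x ^ 2 ≤ 4 * (K : ℝ) ^ 2 := by nlinarith
    nlinarith [mul_le_mul hL this (by positivity) (by positivity)]
  have hpartial := sum_range_tail_div_pow_three_le hr hS hA hC (x := x) (by linarith)
  exact ⟨summable_of_sum_range_le hF_nonneg hpartial,
    (Real.tsum_le_of_sum_range_le hF_nonneg hpartial).trans hbound⟩

end TailEstimate

theorem stmt_12 (r : ℕ → ℝ) (hr : ∀ k, 0 ≤ r k) (A : ℝ) (hA : 0 < A)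
    (hsum : ∃ C : ℝ, ∀ N : ℕ, 1 ≤ N →
      |(∑ k ∈ Finset.Icc 1 N, r k) - A * N * Real.log N| ≤ C * N) :
    ∃ C > (0 : ℝ), ∀ᶠ h : ℝ in nhdsWithin 0 (Set.Ioi 0),
      |∑' k : ℕ, (if (1 / h : ℝ) < k then r k / (k : ℝ) ^ 3 * Real.sin (π * h * k) ^ 2 else 0)| ≤
        C * h ^ 2 * Real.log (1 / h) := by
  obtain ⟨C, hC⟩ := hsum
  have hC_nonneg : 0 ≤ C := by simpa using (abs_nonneg _).trans (hC 1 le_rfl)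
  have hS (N : ℕ) (hN : 1 ≤ N) : ∑ k ∈ Icc 1 N, r k ≤ A * N * log N + C * N := by
    linarith [(abs_le.1 (hC N hN)).2]
  refine ⟨12 * (2 * A + C), by positivity, ?_⟩
  filter_upwards [Ioo_mem_nhdsGT (exp_pos (-1))] with h ⟨h_pos, h_lt⟩
  have hx : exp 1 ≤ 1 / h := by
    rw [le_div_iff₀ h_pos, ← le_div_iff₀' (exp_pos 1), one_div, ← exp_neg]
    exact h_lt.le
  obtain ⟨hF, hF_le⟩ := tsum_tail_div_pow_three_le hr hS hA.le hC_nonneg hx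
  calc _ ≤ ∑' k : ℕ, (if (1 / h : ℝ) < k then r k / (k : ℝ) ^ 3 else 0) :=
        abs_tsum_ite_mul_sin_sq_le (fun k ↦ by have := hr k; positivity) hF _
    _ ≤ 12 * (2 * A + C) * log (1 / h) / (1 / h) ^ 2 := hF_le
    _ = 12 * (2 * A + C) * h ^ 2 * log (1 / h) := by field_simp
end

section
/- Suppose r : ℕ → ℝ≥0 satisfies Σ_{k≤N} r(k) = A·N·log N + O(N) for a constant A > 0. Then as h → 0⁺, Σ_{k ≤ 1/h} r(k)/k³ · sin²(πhk) = (A π²/2)·h²·log²(1/h) + O(h² log(1/h)). -/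
/-!
For `k ≤ N = ⌊1/h⌋₊` we have `sin²(πhk) = (πhk)² + O((hk)⁴)`; since `r ≥ 0` the error is at most
`π⁴h² R(N)/N = O(h² log (1/h))`, where `R(N) = ∑_{k ≤ N} r k`, so the sum is
`π²h² ∑_{k ≤ N} r k / k` up to the admissible error. Abel summation against the weights `1/k` gives
`∑_{k ≤ N} r k / k = R(N)/N + ∑_{m < N} (R(m)/m)/(m+1)`, and `R(m)/m = A log m + O(1)`. The
`O(1)` errors add up to a harmonic sum `O(log N)`, while `∑_{m < N} log m/(m+1)` telescopes against
`(log²(m+1) - log² m)/2` to `log² N / 2 + O(log N)`. Finally `log N = log (1/h) + O(1)`.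
-/

open Real Filter Asymptotics Topology Finset

lemma abs_sin_sq_sub_sq_le (x : ℝ) : |sin x ^ 2 - x ^ 2| ≤ x ^ 4 := by
  wlog hx : 0 ≤ x
  · simpa [show (-x) ^ 4 = x ^ 4 by ring] using this (-x) (by linarith)
  rw [abs_sub_comm, abs_of_nonneg (sub_nonneg.2 sin_sq_le_sq)]
  have hsin := sin_ge_sub_cube hx
  rcases le_or_gt (x ^ 2) 6 with h | h
  · have : (x - x ^ 3 / 6) ^ 2 ≤ sin x ^ 2 := pow_le_pow_left₀ (by nlinarith) hsin 2
    nlinarith [sq_nonneg (x ^ 3), sq_nonneg x]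
  · nlinarith [sq_nonneg (sin x)]

lemma one_div_add_one_le_log_add_one_sub_log {x : ℝ} (hx : 0 < x) :
    1 / (x + 1) ≤ log (x + 1) - log x := by
  rw [← log_div (by positivity) hx.ne']
  convert one_sub_inv_le_log_of_pos (x := (x + 1) / x) (by positivity) using 1
  field_simp
  ring

lemma log_add_one_sub_log_le_one_div {x : ℝ} (hx : 0 < x) :
    log (x + 1) - log x ≤ 1 / x := by
  rw [← log_div (by positivity) hx.ne']
  convert log_le_sub_one_of_pos (x := (x + 1) / x) (by positivity) using 1
  field_simp
  ring

lemma log_natFloor_le_log {x : ℝ} (hx : 1 ≤ x) : log ⌊x⌋₊ ≤ log x :=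
  log_le_log (by exact_mod_cast (Nat.one_le_floor_iff x).2 hx) (Nat.floor_le (by linarith))

lemma log_le_log_natFloor_add_one {x : ℝ} (hx : 1 ≤ x) : log x ≤ log ⌊x⌋₊ + 1 := by
  have h1 : (1 : ℝ) ≤ ⌊x⌋₊ := by exact_mod_cast (Nat.one_le_floor_iff x).2 hx
  have hlt := Nat.lt_floor_add_one x
  rw [← sub_le_iff_le_add', ← log_div (by linarith) (by linarith)]
  refine (log_le_sub_one_of_pos (by positivity)).trans ?_
  rw [sub_le_iff_le_add, div_le_iff₀ (by linarith)]
  linarith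

lemma abs_log_natFloor_sq_sub_log_sq_le {x : ℝ} (hx : 1 ≤ x) :
    |log ⌊x⌋₊ ^ 2 - log x ^ 2| ≤ 2 * log x := by
  have h0 := log_natCast_nonneg ⌊x⌋₊
  have hle := log_natFloor_le_log hx
  have hge := log_le_log_natFloor_add_one hx
  rw [abs_sub_comm, abs_of_nonneg (by nlinarith)]
  nlinarith

lemma sum_Icc_mul_eq_by_parts {R : Type*} [CommRing R] (r w : ℕ → R) (N : ℕ) :
    ∑ k ∈ Icc 1 N, r k * w k =
      (∑ k ∈ Icc 1 N, r k) * w N + ∑ m ∈ range N, (∑ k ∈ Icc 1 m, r k) * (w m - w (m + 1)) := by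
  induction N with
  | zero => simp
  | succ N ih =>
    rw [sum_Icc_succ_top (by omega), sum_Icc_succ_top (by omega), sum_range_succ, ih]
    ring

lemma half_sq_log_add_one_sub_sq_log_mem_Icc (m : ℕ) :
    (log (m + 1) ^ 2 - log m ^ 2) / 2 ∈
      Set.Icc (log m / (m + 1)) (log m / (m + 1) + 2 * (log (m + 1) - log m)) := by
  rcases Nat.eq_zero_or_pos m with rfl | hm
  · simp
  have hm : (1 : ℝ) ≤ m := by exact_mod_cast hm
  have hlo := one_div_add_one_le_log_add_one_sub_log (by positivity : (0 : ℝ) < m)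
  have hhi := log_add_one_sub_log_le_one_div (by positivity : (0 : ℝ) < m)
  have ha : 0 ≤ log m := log_nonneg hm
  have ham : log m ≤ m := (log_le_sub_one_of_pos (by positivity)).trans (by linarith)
  set δ := log (m + 1) - log m
  have hδ1 : δ ≤ 1 := hhi.trans (by rw [div_le_one (by positivity)]; exact hm)
  have hsq : (log (m + 1) ^ 2 - log m ^ 2) / 2 = log m * δ + δ ^ 2 / 2 := by ring
  have hgap : log m * (1 / m - 1 / (m + 1)) ≤ 1 / (m + 1) := by
    rw [div_sub_div _ _ (by positivity) (by positivity), mul_div_assoc',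
      div_le_div_iff₀ (by positivity) (by positivity)]
    nlinarith
  rw [hsq]
  constructor
  · have := mul_le_mul_of_nonneg_left hlo ha
    rw [mul_one_div] at this
    nlinarith [sq_nonneg δ]
  · have := mul_le_mul_of_nonneg_left (sub_le_sub_right hhi (1 / (m + 1))) ha
    rw [mul_sub, mul_one_div] at this
    nlinarith [mul_le_mul_of_nonneg_left hδ1 (hlo.trans' (by positivity) : (0 : ℝ) ≤ δ)]

lemma abs_sum_range_log_div_add_one_sub_le (N : ℕ) :
    |∑ m ∈ range N, log m / (m + 1) - log N ^ 2 / 2| ≤ 2 * log N := by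
  have hsq := sum_range_sub (fun n : ℕ => log n ^ 2) N
  have hlog := sum_range_sub (fun n : ℕ => log n) N
  push_cast at hsq hlog
  have hlo := sum_le_sum fun m (_ : m ∈ range N) => (half_sq_log_add_one_sub_sq_log_mem_Icc m).1
  have hhi := sum_le_sum fun m (_ : m ∈ range N) => (half_sq_log_add_one_sub_sq_log_mem_Icc m).2
  rw [← sum_div, hsq] at hlo hhi
  rw [sum_add_distrib, ← mul_sum, hlog] at hhi
  simp only [log_zero] at hlo hhi
  rw [abs_le]
  constructor <;> linarith

section PartialSums

variable {r : ℕ → ℝ} {A C : ℝ}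

lemma abs_sum_Icc_div_self_sub_le
    (hR : ∀ N, 1 ≤ N → |∑ k ∈ Icc 1 N, r k - A * N * log N| ≤ C * N) (N : ℕ) :
    |(∑ k ∈ Icc 1 N, r k) / N - A * log N| ≤ C := by
  rcases Nat.eq_zero_or_pos N with rfl | hN
  · simpa using (abs_nonneg _).trans (hR 1 le_rfl)
  have hN' : (0 : ℝ) < N := by exact_mod_cast hN
  rw [show (∑ k ∈ Icc 1 N, r k) / N - A * log N = (∑ k ∈ Icc 1 N, r k - A * N * log N) / N by
    field_simp, abs_div, Nat.abs_cast, div_le_iff₀ hN']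
  exact hR N hN

lemma abs_sum_Icc_div_self_le
    (hR : ∀ N, 1 ≤ N → |∑ k ∈ Icc 1 N, r k - A * N * log N| ≤ C * N) (N : ℕ) :
    |(∑ k ∈ Icc 1 N, r k) / N| ≤ C + |A| * log N := by
  calc _ = |((∑ k ∈ Icc 1 N, r k) / N - A * log N) + A * log N| := by ring_nf
    _ ≤ _ := (abs_add_le _ _).trans (add_le_add (abs_sum_Icc_div_self_sub_le hR N)
        (by rw [abs_mul, abs_of_nonneg (log_natCast_nonneg N)]))

lemma abs_sum_Icc_div_sub_half_mul_log_sq_le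
    (hR : ∀ N, 1 ≤ N → |∑ k ∈ Icc 1 N, r k - A * N * log N| ≤ C * N) (N : ℕ) :
    |∑ k ∈ Icc 1 N, r k / k - A / 2 * log N ^ 2| ≤ (3 * |A| + 2 * C) * (1 + log N) := by
  set R : ℕ → ℝ := fun n => ∑ k ∈ Icc 1 n, r k
  have he := abs_sum_Icc_div_self_sub_le hR
  have hC : 0 ≤ C := (abs_nonneg _).trans (he 0)
  have hparts : ∑ k ∈ Icc 1 N, r k / k = R N / N + ∑ m ∈ range N, R m / m / (m + 1) := by
    simp only [div_eq_mul_inv, sum_Icc_mul_eq_by_parts r (fun k => (k : ℝ)⁻¹) N]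
    congr 1
    refine sum_congr rfl fun m _ => ?_
    rcases Nat.eq_zero_or_pos m with rfl | hm
    · simp [R]
    · have : (0 : ℝ) < m := by exact_mod_cast hm
      push_cast
      field_simp
      ring
  have herr : |∑ m ∈ range N, R m / m / (m + 1) - A * ∑ m ∈ range N, log m / (m + 1)| ≤
      C * (1 + log N) := by
    rw [mul_sum, ← sum_sub_distrib]
    calc _ ≤ ∑ m ∈ range N, C * ((m : ℝ) + 1)⁻¹ := by
          refine (abs_sum_le_sum_abs _ _).trans (sum_le_sum fun m _ => ?_)
          rw [← mul_div_assoc, ← sub_div, abs_div, abs_of_pos (by positivity : (0 : ℝ) < m + 1),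
            div_eq_mul_inv]
          exact mul_le_mul_of_nonneg_right (he m) (by positivity)
      _ = C * harmonic N := by simp [harmonic, mul_sum]
      _ ≤ C * (1 + log N) := mul_le_mul_of_nonneg_left (harmonic_le_one_add_log N) hC
  have hlog : |A * ∑ m ∈ range N, log m / (m + 1) - A / 2 * log N ^ 2| ≤ |A| * (2 * log N) := by
    rw [show A / 2 * log N ^ 2 = A * (log N ^ 2 / 2) by ring, ← mul_sub, abs_mul]
    exact mul_le_mul_of_nonneg_left (abs_sum_range_log_div_add_one_sub_le N) (abs_nonneg A)
  rw [hparts]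
  calc _ = |R N / N
          + (∑ m ∈ range N, R m / m / (m + 1) - A * ∑ m ∈ range N, log m / (m + 1))
          + (A * ∑ m ∈ range N, log m / (m + 1) - A / 2 * log N ^ 2)| := by ring_nf
    _ ≤ C + |A| * log N + C * (1 + log N) + |A| * (2 * log N) :=
        (abs_add_three _ _ _).trans
          (add_le_add (add_le_add (abs_sum_Icc_div_self_le hR N) herr) hlog)
    _ ≤ _ := by nlinarith [abs_nonneg A, mul_nonneg hC (log_natCast_nonneg N)]

end PartialSums

lemma abs_sum_sin_sq_sub_le {r : ℕ → ℝ} (hr : ∀ k, 0 ≤ r k) {h : ℝ} (h0 : 0 ≤ h) {N : ℕ}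
    (hN : h * N ≤ 1) :
    |∑ k ∈ Icc 1 N, r k / (k : ℝ) ^ 3 * sin (π * h * k) ^ 2 -
        π ^ 2 * h ^ 2 * ∑ k ∈ Icc 1 N, r k / k|
      ≤ π ^ 4 * h ^ 2 * ((∑ k ∈ Icc 1 N, r k) / N) := by
  rcases Nat.eq_zero_or_pos N with rfl | hN0
  · simp
  have hN0 : (0 : ℝ) < N := by exact_mod_cast hN0
  have hterm : ∀ k ∈ Icc 1 N,
      |r k / (k : ℝ) ^ 3 * sin (π * h * k) ^ 2 - π ^ 2 * h ^ 2 * (r k / k)|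
        ≤ π ^ 4 * h ^ 4 * N * r k := by
    intro k hkI
    have hk : (1 : ℝ) ≤ k := by exact_mod_cast (mem_Icc.1 hkI).1
    have hkN : (k : ℝ) ≤ N := by exact_mod_cast (mem_Icc.1 hkI).2
    calc _ = |r k / (k : ℝ) ^ 3 * (sin (π * h * k) ^ 2 - (π * h * k) ^ 2)| := by
          congr 1
          field_simp
      _ = r k / (k : ℝ) ^ 3 * |sin (π * h * k) ^ 2 - (π * h * k) ^ 2| := by
          rw [abs_mul, abs_of_nonneg (div_nonneg (hr k) (by positivity))]
      _ ≤ r k / (k : ℝ) ^ 3 * (π * h * k) ^ 4 :=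
          mul_le_mul_of_nonneg_left (abs_sin_sq_sub_sq_le _) (div_nonneg (hr k) (by positivity))
      _ = π ^ 4 * h ^ 4 * k * r k := by field_simp
      _ ≤ π ^ 4 * h ^ 4 * N * r k := by gcongr; exact hr k
  rw [mul_sum, ← sum_sub_distrib]
  calc _ ≤ ∑ k ∈ Icc 1 N, π ^ 4 * h ^ 4 * N * r k :=
        (abs_sum_le_sum_abs _ _).trans (sum_le_sum hterm)
    _ = π ^ 4 * h ^ 2 * (h * N) ^ 2 * ((∑ k ∈ Icc 1 N, r k) / N) := by
        rw [← mul_sum]; field_simp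
    _ ≤ π ^ 4 * h ^ 2 * 1 * ((∑ k ∈ Icc 1 N, r k) / N) := by
        gcongr
        · exact div_nonneg (sum_nonneg fun k _ => hr k) hN0.le
        · exact pow_le_one₀ (by positivity) hN
    _ = _ := by ring

lemma eventually_pos_and_one_le_one_div_nhdsGT_zero :
    ∀ᶠ h : ℝ in 𝓝[>] 0, 0 < h ∧ 1 ≤ 1 / h :=
  Filter.mem_of_superset (Ioc_mem_nhdsGT one_pos) fun h hh =>
    ⟨hh.1, by rw [le_div_iff₀ hh.1]; linarith [hh.2]⟩

lemma isBigO_sq_mul_one_add_log_one_div :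
    (fun h : ℝ => h ^ 2 * (1 + log (1 / h))) =O[𝓝[>] 0] fun h => h ^ 2 * log (1 / h) := by
  refine (isBigO_refl _ _).mul (((isLittleO_one_left_iff ℝ).2 ?_).isBigO.add (isBigO_refl _ _))
  simpa only [one_div, Function.comp_def] using
    tendsto_norm_atTop_atTop.comp (tendsto_log_atTop.comp tendsto_inv_nhdsGT_zero)

lemma isBigO_sq_mul_comp_natFloor_one_div {f : ℕ → ℝ} {c : ℝ}
    (hf : ∀ N, |f N| ≤ c * (1 + log N)) :
    (fun h : ℝ => h ^ 2 * f ⌊1 / h⌋₊) =O[𝓝[>] 0] fun h => h ^ 2 * (1 + log (1 / h)) := by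
  refine IsBigO.of_bound c ?_
  filter_upwards [eventually_pos_and_one_le_one_div_nhdsGT_zero] with h ⟨_, hx⟩
  have hle := log_natFloor_le_log hx
  have hc : 0 ≤ c := by simpa using (abs_nonneg _).trans (hf 1)
  rw [Real.norm_eq_abs, Real.norm_eq_abs, abs_mul, abs_mul, abs_of_nonneg (sq_nonneg h),
    abs_of_nonneg (by linarith [log_nonneg hx] : 0 ≤ 1 + log (1 / h))]
  calc h ^ 2 * |f ⌊1 / h⌋₊| ≤ h ^ 2 * (c * (1 + log ⌊1 / h⌋₊)) := by gcongr; exact hf _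
    _ ≤ c * (h ^ 2 * (1 + log (1 / h))) := by rw [mul_left_comm]; gcongr

lemma isBigO_sq_mul_log_natFloor_sq_sub_log_sq :
    (fun h : ℝ => h ^ 2 * (log ⌊1 / h⌋₊ ^ 2 - log (1 / h) ^ 2))
      =O[𝓝[>] 0] fun h => h ^ 2 * (1 + log (1 / h)) := by
  refine IsBigO.of_bound 2 ?_
  filter_upwards [eventually_pos_and_one_le_one_div_nhdsGT_zero] with h ⟨_, hx⟩
  have hd := abs_log_natFloor_sq_sub_log_sq_le hx
  have hL := log_nonneg hx
  rw [Real.norm_eq_abs, Real.norm_eq_abs, abs_mul, abs_of_nonneg (sq_nonneg h),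
    abs_of_nonneg (by positivity : 0 ≤ h ^ 2 * (1 + log (1 / h)))]
  nlinarith [mul_le_mul_of_nonneg_left hd (sq_nonneg h)]

lemma isBigO_sum_sin_sq_sub {r : ℕ → ℝ} (hr : ∀ k, 0 ≤ r k) {A C : ℝ}
    (hR : ∀ N, 1 ≤ N → |∑ k ∈ Icc 1 N, r k - A * N * log N| ≤ C * N) :
    (fun h : ℝ => ∑ k ∈ Icc 1 ⌊1 / h⌋₊, r k / (k : ℝ) ^ 3 * sin (π * h * k) ^ 2
      - π ^ 2 * h ^ 2 * ∑ k ∈ Icc 1 ⌊1 / h⌋₊, r k / k)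
      =O[𝓝[>] 0] fun h => h ^ 2 * (1 + log (1 / h)) := by
  have hRN (N : ℕ) : |(∑ k ∈ Icc 1 N, r k) / N| ≤ (|A| + C) * (1 + log N) := by
    have := abs_sum_Icc_div_self_le hR N
    have hC : 0 ≤ C := (abs_nonneg _).trans (abs_sum_Icc_div_self_sub_le hR 0)
    nlinarith [abs_nonneg A, log_natCast_nonneg N]
  refine (IsBigO.of_bound (π ^ 4) ?_).trans (isBigO_sq_mul_comp_natFloor_one_div hRN)
  filter_upwards [eventually_pos_and_one_le_one_div_nhdsGT_zero] with h ⟨hh, hx⟩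
  have hN : h * ⌊1 / h⌋₊ ≤ 1 := by
    have := Nat.floor_le (by linarith : 0 ≤ 1 / h)
    rw [le_div_iff₀ hh] at this
    linarith
  rw [Real.norm_eq_abs, Real.norm_eq_abs, abs_mul, abs_of_nonneg (sq_nonneg h), ← mul_assoc]
  exact (abs_sum_sin_sq_sub_le hr hh.le hN).trans (by gcongr; exact le_abs_self _)

theorem stmt_13_general (r : ℕ → ℝ) (hr : ∀ k, 0 ≤ r k) (A : ℝ)
    (hsum : ∃ C : ℝ, ∀ N : ℕ, 1 ≤ N →
      |(∑ k ∈ Finset.Icc 1 N, r k) - A * N * Real.log N| ≤ C * N) :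
    ∃ C > (0 : ℝ), ∀ᶠ h : ℝ in nhdsWithin 0 (Set.Ioi 0),
      |(∑ k ∈ Finset.Icc 1 ⌊(1 / h : ℝ)⌋₊, r k / (k : ℝ) ^ 3 * Real.sin (π * h * k) ^ 2) -
          A * π ^ 2 / 2 * h ^ 2 * Real.log (1 / h) ^ 2| ≤
        C * h ^ 2 * Real.log (1 / h) := by
  obtain ⟨C, hR⟩ := hsum
  have hsin := isBigO_sum_sin_sq_sub hr hR
  have habel := (isBigO_sq_mul_comp_natFloor_one_div
    (abs_sum_Icc_div_sub_half_mul_log_sq_le hR)).const_mul_left (π ^ 2)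
  have hlog := isBigO_sq_mul_log_natFloor_sq_sub_log_sq.const_mul_left (A * π ^ 2 / 2)
  have hmain : (fun h : ℝ => ∑ k ∈ Icc 1 ⌊1 / h⌋₊, r k / (k : ℝ) ^ 3 * sin (π * h * k) ^ 2
      - A * π ^ 2 / 2 * h ^ 2 * log (1 / h) ^ 2) =O[𝓝[>] 0] fun h => h ^ 2 * log (1 / h) :=
    ((hsin.add (habel.add hlog)).trans isBigO_sq_mul_one_add_log_one_div).congr_left
      fun h => by ring
  obtain ⟨c, hc, hO⟩ := hmain.exists_pos
  refine ⟨c, hc, ?_⟩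
  filter_upwards [hO.bound, eventually_pos_and_one_le_one_div_nhdsGT_zero] with h hb ⟨_, hx⟩
  rwa [Real.norm_eq_abs, Real.norm_of_nonneg (by have := log_nonneg hx; positivity),
    ← mul_assoc] at hb

theorem stmt_13 (r : ℕ → ℝ) (hr : ∀ k, 0 ≤ r k) (A : ℝ) (hA : 0 < A)
    (hsum : ∃ C : ℝ, ∀ N : ℕ, 1 ≤ N →
      |(∑ k ∈ Finset.Icc 1 N, r k) - A * N * Real.log N| ≤ C * N) :
    ∃ C > (0 : ℝ), ∀ᶠ h : ℝ in nhdsWithin 0 (Set.Ioi 0),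
      |(∑ k ∈ Finset.Icc 1 ⌊(1 / h : ℝ)⌋₊, r k / (k : ℝ) ^ 3 * Real.sin (π * h * k) ^ 2) -
          A * π ^ 2 / 2 * h ^ 2 * Real.log (1 / h) ^ 2| ≤
        C * h ^ 2 * Real.log (1 / h) :=
  stmt_13_general r hr A hsum
end

section
/- Let H be a hyperplane through the origin in ℝ^d orthogonal to unit vector q̂, let w be a unit vector not proportional to q̂ with angle θ ∈ (0,π) between q̂ and w, and let δ > 0. Then any point p ∈ H with |p·w| ≤ δ lies within distance δ/sin θ of the subspace H ∩ w^⊥. -/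
/-!
Let `v = w - ⟪q̂, w⟫ q̂` be the component of `w` orthogonal to `q̂`; its length is `sin θ`. On `H`
the functionals `⟪w, ·⟫` and `⟪v, ·⟫` agree, so `H ∩ w^⊥ = H ∩ v^⊥`, and since `v ∈ H` the
orthogonal projection of `p` onto `v^⊥` stays in `H`. It lies at distance
`|⟪p, v⟫| / ‖v‖ = |⟪p, w⟫| / sin θ` from `p`.
-/

open RealInnerProductSpace

section

variable {E : Type*} [NormedAddCommGroup E] [InnerProductSpace ℝ E]

lemma inner_sub_inner_smul_self {q : E} (hq : ‖q‖ = 1) (w : E) : ⟪q, w - ⟪q, w⟫ • q⟫ = 0 := by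
  rw [inner_sub_right, real_inner_smul_right, real_inner_self_eq_norm_sq, hq]
  ring

lemma norm_sub_inner_smul_self_sq {q : E} (hq : ‖q‖ = 1) (w : E) :
    ‖w - ⟪q, w⟫ • q‖ ^ 2 = ‖w‖ ^ 2 - ⟪q, w⟫ ^ 2 := by
  rw [norm_sub_sq_real, real_inner_smul_right, norm_smul, hq, Real.norm_eq_abs, mul_one,
    sq_abs, real_inner_comm]
  ring

lemma inner_eq_inner_sub_inner_smul_of_inner_eq_zero {q x : E} (hx : ⟪q, x⟫ = 0) (w : E) :
    ⟪w, x⟫ = ⟪w - ⟪q, w⟫ • q, x⟫ := by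
  rw [inner_sub_left, real_inner_smul_left, hx, mul_zero, sub_zero]

lemma inner_sub_inner_div_norm_sq_smul (v p : E) : ⟪v, p - (⟪v, p⟫ / ‖v‖ ^ 2) • v⟫ = 0 := by
  rcases eq_or_ne v 0 with rfl | hv
  · simp
  rw [inner_sub_right, real_inner_smul_right, real_inner_self_eq_norm_sq,
    div_mul_cancel₀ _ (by positivity), sub_self]

lemma norm_inner_div_norm_sq_smul (v p : E) : ‖(⟪v, p⟫ / ‖v‖ ^ 2) • v‖ = |⟪v, p⟫| / ‖v‖ := by
  rcases eq_or_ne v 0 with rfl | hv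
  · simp
  rw [norm_smul, Real.norm_eq_abs, abs_div, abs_sq]
  field_simp

lemma infDist_inter_orthogonal_le {q p : E} (hq : ‖q‖ = 1) (hp : ⟪q, p⟫ = 0) (w : E) :
    Metric.infDist p {x | ⟪q, x⟫ = 0 ∧ ⟪w, x⟫ = 0} ≤ |⟪p, w⟫| / ‖w - ⟪q, w⟫ • q‖ := by
  set v := w - ⟪q, w⟫ • q
  set x := p - (⟪v, p⟫ / ‖v‖ ^ 2) • v
  have hx : ⟪q, x⟫ = 0 := by
    rw [inner_sub_right, real_inner_smul_right, hp, inner_sub_inner_smul_self hq]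
    ring
  have hmem : ⟪q, x⟫ = 0 ∧ ⟪w, x⟫ = 0 :=
    ⟨hx, by rw [inner_eq_inner_sub_inner_smul_of_inner_eq_zero hx,
      inner_sub_inner_div_norm_sq_smul]⟩
  calc Metric.infDist p {x | ⟪q, x⟫ = 0 ∧ ⟪w, x⟫ = 0}
      ≤ ‖p - x‖ := dist_eq_norm p x ▸ Metric.infDist_le_dist_of_mem hmem
    _ = |⟪p, w⟫| / ‖v‖ := by
      rw [sub_sub_cancel, norm_inner_div_norm_sq_smul, real_inner_comm w p,
        inner_eq_inner_sub_inner_smul_of_inner_eq_zero hp w]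

end

theorem stmt_19_general (d : ℕ) (qhat w : EuclideanSpace ℝ (Fin d))
    (hq : ‖qhat‖ = 1) (hw : ‖w‖ = 1)
    (θ : ℝ) (hθ : θ ∈ Set.Ioo (0 : ℝ) Real.pi) (hcos : Real.cos θ = ⟪qhat, w⟫)
    (δ : ℝ)
    (p : EuclideanSpace ℝ (Fin d)) (hp : ⟪qhat, p⟫ = 0) (hpw : |⟪p, w⟫| ≤ δ) :
    Metric.infDist p {x : EuclideanSpace ℝ (Fin d) | ⟪qhat, x⟫ = 0 ∧ ⟪w, x⟫ = 0} ≤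
      δ / Real.sin θ := by
  have hsin : Real.sin θ = ‖w - ⟪qhat, w⟫ • qhat‖ := by
    rw [Real.sin_eq_sqrt_one_sub_cos_sq hθ.1.le hθ.2.le, hcos, ← one_pow 2, ← hw,
      ← norm_sub_inner_smul_self_sq hq, Real.sqrt_sq (norm_nonneg _)]
  calc Metric.infDist p {x | ⟪qhat, x⟫ = 0 ∧ ⟪w, x⟫ = 0}
      ≤ |⟪p, w⟫| / Real.sin θ := hsin ▸ infDist_inter_orthogonal_le hq hp w
    _ ≤ δ / Real.sin θ := div_le_div_of_nonneg_right hpw (hsin ▸ norm_nonneg _)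

theorem stmt_19 (d : ℕ) (qhat w : EuclideanSpace ℝ (Fin d))
    (hq : ‖qhat‖ = 1) (hw : ‖w‖ = 1) (hne : w ≠ qhat ∧ w ≠ -qhat)
    (θ : ℝ) (hθ : θ ∈ Set.Ioo (0 : ℝ) Real.pi) (hcos : Real.cos θ = ⟪qhat, w⟫)
    (δ : ℝ) (hδ : 0 < δ)
    (p : EuclideanSpace ℝ (Fin d)) (hp : ⟪qhat, p⟫ = 0) (hpw : |⟪p, w⟫| ≤ δ) :
    Metric.infDist p {x : EuclideanSpace ℝ (Fin d) | ⟪qhat, x⟫ = 0 ∧ ⟪w, x⟫ = 0} ≤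
      δ / Real.sin θ :=
  stmt_19_general d qhat w hq hw θ hθ hcos δ p hp hpw
end
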